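/- arXiv:1906.03091 — 6 statements merged into one kernel-verified Lean document; each statement's English description precedes it below -/
import Mathlib

section
/- The rule wM⊡ is derivable in the proof system K⊡: for all L(⊡)-formulas φ and ψ, if ⊢_{K⊡} φ → ψ, then ⊢_{K⊡} ⊡φ ∧ ⊡(ψ → φ) → ⊡ψ. -/
/-- Formulas of the language L(⊡): propositional variables, ¬, ∧, and ⊡ (`box`). -/
inductive Form : Type
  | var : ℕ → Form
  | neg : Form → Form
  | conj : Form → Form → Form
  | box : Form → Form

namespace Form
/-- Implication, defined as usual. -/
def imp (φ ψ : Form) : Form := neg (conj φ (neg ψ))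
/-- Disjunction, defined as usual. -/
def disj (φ ψ : Form) : Form := neg (conj (neg φ) (neg ψ))
/-- Biconditional, defined as usual. -/
def biff (φ ψ : Form) : Form := conj (imp φ ψ) (imp ψ φ)
/-- The constant ⊤. -/
def top : Form := imp (var 0) (var 0)
end Form

/-- A bimodal model: a nonempty set of worlds, two accessibility relations and a valuation. -/
structure BiModel : Type 1 where
  S : Type
  ne : Nonempty S
  R1 : S → S → Prop
  R2 : S → S → Prop
  V : ℕ → Set S

/-- Truth of a formula at a world: ⊡φ holds at s iff all R1-successors and
R2-successors of s agree on the truth value of φ. -/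
def sat (M : BiModel) : M.S → Form → Prop
  | s, .var n => s ∈ M.V n
  | s, .neg φ => ¬ sat M s φ
  | s, .conj φ ψ => sat M s φ ∧ sat M s ψ
  | s, .box φ => ∀ t u, M.R1 s t → M.R2 s u → (sat M t φ ↔ sat M u φ)

/-- Boolean evaluation treating boxed formulas as atoms (for defining tautologies). -/
def beval (v : Form → Bool) : Form → Bool
  | .var n => v (.var n)
  | .neg φ => !beval v φ
  | .conj φ ψ => beval v φ && beval v ψ
  | .box φ => v (.box φ)

/-- φ is an instance of a propositional tautology. -/
def Form.isTaut (φ : Form) : Prop := ∀ v : Form → Bool, beval v φ = true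

/-- Theorems of the system K⊡ extended with the extra axioms in `Ext`:
propositional tautologies, ⊡⊤, ⊡EQU, ⊡CON, ⊡DIS, extra axioms,
closed under modus ponens and RE⊡. -/
inductive KThm (Ext : Form → Prop) : Form → Prop
  | taut {φ : Form} : φ.isTaut → KThm Ext φ
  | boxTop : KThm Ext (Form.box Form.top)
  | equ (φ : Form) : KThm Ext ((Form.box φ).biff (Form.box (Form.neg φ)))
  | con (φ ψ : Form) :
      KThm Ext (((Form.box φ).conj (Form.box ψ)).imp (Form.box (φ.conj ψ)))
  | dis (φ ψ χ : Form) :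
      KThm Ext ((Form.box φ).imp
        ((Form.box (φ.disj ψ)).disj (Form.box ((Form.neg φ).disj χ))))
  | ext {φ : Form} : Ext φ → KThm Ext φ
  | mp {φ ψ : Form} : KThm Ext (φ.imp ψ) → KThm Ext φ → KThm Ext ψ
  | re {φ ψ : Form} : KThm Ext (φ.biff ψ) → KThm Ext ((Form.box φ).biff (Form.box ψ))

/-- Γ ⊢ φ: φ is derivable from theorems of the system together with premises
in Γ using modus ponens. -/
inductive Deriv (Ext : Form → Prop) (Γ : Set Form) : Form → Prop
  | thm {φ : Form} : KThm Ext φ → Deriv Ext Γ φ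
  | prem {φ : Form} : φ ∈ Γ → Deriv Ext Γ φ
  | mp {φ ψ : Form} : Deriv Ext Γ (φ.imp ψ) → Deriv Ext Γ φ → Deriv Ext Γ ψ

/-- No extra axioms: the minimal system K⊡. -/
def NoExt : Form → Prop := fun _ => False

/-! By ⊡DIS, ⊡φ yields ⊡(φ ∨ ψ) or ⊡(¬φ ∨ ¬ψ). Since ⊢ φ → ψ, the formula φ ∨ ψ is equivalent
to ψ, so in the first case RE⊡ gives ⊡ψ. In the second case ⊡CON together with ⊡(ψ → φ) gives
⊡((¬φ ∨ ¬ψ) ∧ (ψ → φ)); that conjunction is equivalent to ¬ψ, so RE⊡ gives ⊡¬ψ, and ⊡EQU turns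
this into ⊡ψ. -/

@[simp] lemma beval_imp (v : Form → Bool) (φ ψ : Form) :
    beval v (φ.imp ψ) = (!beval v φ || beval v ψ) := by
  simp [Form.imp, beval]

@[simp] lemma beval_disj (v : Form → Bool) (φ ψ : Form) :
    beval v (φ.disj ψ) = (beval v φ || beval v ψ) := by
  simp [Form.disj, beval]

@[simp] lemma beval_biff (v : Form → Bool) (φ ψ : Form) :
    beval v (φ.biff ψ) = (beval v φ == beval v ψ) := by
  simp only [Form.biff, beval, beval_imp]
  cases beval v φ <;> cases beval v ψ <;> rfl

namespace KThm

variable {Ext : Form → Prop}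

theorem of_taut_consequence {Γ : List Form} {φ : Form} (hΓ : Γ.Forall (KThm Ext))
    (hφ : ∀ v, Γ.Forall (fun χ => beval v χ = true) → beval v φ = true) : KThm Ext φ := by
  simp only [List.forall_iff_forall_mem] at hΓ hφ
  induction Γ generalizing φ with
  | nil => exact taut fun v => hφ v (by simp)
  | cons χ Γ ih =>
    refine mp (φ := χ) (ih (fun θ hθ => hΓ θ (by simp [hθ])) fun v hv => ?_) (hΓ χ (by simp))
    cases hχ : beval v χ <;> simp_all

theorem box_biff_of_beval_eq {φ ψ : Form} (h : ∀ v, beval v φ = beval v ψ) :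
    KThm Ext ((Form.box φ).biff (Form.box ψ)) :=
  re (taut fun v => by simp [h v])

theorem box_disj_biff_of_imp {φ ψ : Form} (h : KThm Ext (φ.imp ψ)) :
    KThm Ext ((Form.box (φ.disj ψ)).biff (Form.box ψ)) := by
  refine re (of_taut_consequence (Γ := [φ.imp ψ]) h fun v hv => ?_)
  simp only [List.Forall, beval_imp, beval_biff, beval_disj] at hv ⊢
  revert hv; cases beval v φ <;> cases beval v ψ <;> decide

end KThm

/-- The rule wM⊡ is derivable in K⊡: if ⊢ φ → ψ then ⊢ ⊡φ ∧ ⊡(ψ → φ) → ⊡ψ. -/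
theorem stmt11 (φ ψ : Form) (h : KThm NoExt (φ.imp ψ)) :
    KThm NoExt (((Form.box φ).conj (Form.box (ψ.imp φ))).imp (Form.box ψ)) := by
  let θ := (φ.neg.disj ψ.neg).conj (ψ.imp φ)
  have hθ : KThm NoExt ((Form.box θ).biff (Form.box ψ.neg)) :=
    KThm.box_biff_of_beval_eq fun v => by
      simp only [θ, beval, beval_imp, beval_disj]
      cases beval v φ <;> cases beval v ψ <;> rfl
  refine KThm.of_taut_consequence (Γ := [_, _, _, _, _])
    ⟨KThm.dis φ ψ ψ.neg, KThm.con (φ.neg.disj ψ.neg) (ψ.imp φ), KThm.box_disj_biff_of_imp h, hθ,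
      KThm.equ ψ⟩
    fun v hv => ?_
  simp only [List.Forall, beval, beval_imp, beval_disj, beval_biff] at hv ⊢
  grind
end

section
/- The proof system K⊡ is sound and strongly complete with respect to the class of all bimodal frames: for every set Γ of L(⊡)-formulas and every L(⊡)-formula φ, Γ ⊢_{K⊡} φ if and only if every pointed bimodal model that satisfies all formulas of Γ also satisfies φ. -/
section KBox
open Form

attribute [local instance] Classical.propDecidable

/-- Falsum. -/
abbrev fbot : Form := Form.neg Form.top

/-! ### Tautology instances -/

section Tauts

lemma taut_T1 (a b : Form) : (a.imp (b.imp a)).isTaut := by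
  intro v; simp [Form.imp, beval]
  all_goals cases beval v a <;> cases beval v b <;> simp

lemma taut_T2 (a b c : Form) :
    ((a.imp (b.imp c)).imp ((a.imp b).imp (a.imp c))).isTaut := by
  intro v; simp [Form.imp, beval]
  all_goals cases beval v a <;> cases beval v b <;> cases beval v c <;> simp

lemma taut_T3 (a : Form) : (a.imp a).isTaut := by
  intro v; simp [Form.imp, beval]

lemma taut_T4 (a : Form) : (a.imp (a.neg.imp fbot)).isTaut := by
  intro v; simp [Form.imp, Form.top, beval]
  all_goals cases beval v a <;> simp

lemma taut_T5 (a : Form) :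
    ((a.imp fbot).imp ((a.neg.imp fbot).imp fbot)).isTaut := by
  intro v; simp [Form.imp, Form.top, beval]
  all_goals cases beval v a <;> cases v (Form.var 0) <;> simp

lemma taut_T6 (a : Form) : ((a.neg.imp fbot).imp a).isTaut := by
  intro v; simp [Form.imp, Form.top, beval]
  all_goals cases beval v a <;> cases v (Form.var 0) <;> simp

lemma taut_T7 (a b : Form) : ((a.conj b).imp a).isTaut := by
  intro v; simp [Form.imp, beval]
  all_goals cases beval v a <;> cases beval v b <;> simp

lemma taut_T8 (a b : Form) : ((a.conj b).imp b).isTaut := by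
  intro v; simp [Form.imp, beval]
  all_goals cases beval v a <;> cases beval v b <;> simp

lemma taut_T9 (a b : Form) : (a.imp (b.imp (a.conj b))).isTaut := by
  intro v; simp [Form.imp, beval]
  all_goals cases beval v a <;> cases beval v b <;> simp

lemma taut_T10 (a b : Form) : ((a.disj b).imp (a.neg.imp b)).isTaut := by
  intro v; simp [Form.imp, Form.disj, beval]
  all_goals cases beval v a <;> cases beval v b <;> simp

lemma taut_T11 (a b : Form) : ((a.biff b).imp (a.imp b)).isTaut := by
  intro v; simp [Form.imp, Form.biff, beval]
  all_goals cases beval v a <;> cases beval v b <;> simp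

lemma taut_T12 (a b : Form) : ((a.biff b).imp (b.imp a)).isTaut := by
  intro v; simp [Form.imp, Form.biff, beval]
  all_goals cases beval v a <;> cases beval v b <;> simp

lemma taut_T13 (c a : Form) :
    ((c.imp (a.imp fbot)).imp ((c.disj a.neg).biff a.neg)).isTaut := by
  intro v; simp [Form.imp, Form.disj, Form.biff, Form.top, beval]
  all_goals cases beval v a <;> cases beval v c <;> cases v (Form.var 0) <;> simp

lemma taut_T14 (c a : Form) :
    ((c.imp (a.neg.imp fbot)).imp ((c.disj a).biff a)).isTaut := by
  intro v; simp [Form.imp, Form.disj, Form.biff, Form.top, beval]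
  all_goals cases beval v a <;> cases beval v c <;> cases v (Form.var 0) <;> simp

lemma taut_T15 (a b c : Form) :
    (((a.disj c).conj (b.disj c)).biff ((a.conj b).disj c)).isTaut := by
  intro v; simp [Form.imp, Form.disj, Form.biff, beval]
  all_goals cases beval v a <;> cases beval v b <;> cases beval v c <;> simp

lemma taut_T16 (b : Form) : (Form.top.biff (Form.top.disj b)).isTaut := by
  intro v; simp [Form.imp, Form.disj, Form.biff, Form.top, beval]
  all_goals cases v (Form.var 0) <;> cases beval v b <;> simp

lemma taut_T17 (x y z : Form) :
    ((x.imp y).imp ((y.imp z).imp (x.imp z))).isTaut := by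
  intro v; simp [Form.imp, beval]
  all_goals cases beval v x <;> cases beval v y <;> cases beval v z <;> simp

end Tauts
/-! ### Basic proof theory -/

variable {Ext : Form → Prop}

lemma Deriv.mono {Γ Δ : Set Form} {φ : Form} (h : Γ ⊆ Δ)
    (hd : Deriv Ext Γ φ) : Deriv Ext Δ φ := by
  induction hd with
  | thm h' => exact .thm h'
  | prem h' => exact .prem (h h')
  | mp _ _ ih1 ih2 => exact .mp ih1 ih2

lemma Deriv.cut {Γ Δ : Set Form} {φ : Form} (hd : Deriv Ext Γ φ)
    (h : ∀ χ ∈ Γ, Deriv Ext Δ χ) : Deriv Ext Δ φ := by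
  induction hd with
  | thm h' => exact .thm h'
  | prem h' => exact h _ h'
  | mp _ _ ih1 ih2 => exact .mp ih1 ih2

lemma kthm_of_deriv_empty {φ : Form} (h : Deriv Ext (∅ : Set Form) φ) :
    KThm Ext φ := by
  induction h with
  | thm h' => exact h'
  | prem h' => exact absurd h' (Set.notMem_empty _)
  | mp _ _ ih1 ih2 => exact .mp ih1 ih2

lemma deduction {Γ : Set Form} {ψ φ : Form}
    (h : Deriv Ext (insert ψ Γ) φ) : Deriv Ext Γ (ψ.imp φ) := by
  induction h with
  | @thm χ h' => exact .mp (.thm (.taut (taut_T1 χ ψ))) (.thm h')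
  | @prem χ h' =>
    rcases Set.mem_insert_iff.mp h' with rfl | h'
    · exact .thm (.taut (taut_T3 χ))
    · exact .mp (.thm (.taut (taut_T1 χ ψ))) (.prem h')
  | @mp a b _ _ ih1 ih2 =>
    exact .mp (.mp (.thm (.taut (taut_T2 ψ a b))) ih1) ih2

lemma Deriv.finite {Γ : Set Form} {φ : Form} (h : Deriv Ext Γ φ) :
    ∃ Γ0 : Finset Form, ↑Γ0 ⊆ Γ ∧ Deriv Ext (↑Γ0 : Set Form) φ := by
  induction h with
  | thm h' => exact ⟨∅, by simp, .thm h'⟩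
  | @prem χ h' => exact ⟨{χ}, by simpa, .prem (by simp)⟩
  | mp _ _ ih1 ih2 =>
    obtain ⟨A, hA, dA⟩ := ih1
    obtain ⟨B, hB, dB⟩ := ih2
    refine ⟨A ∪ B, ?_, .mp (dA.mono ?_) (dB.mono ?_)⟩
    · intro x hx
      rcases Finset.mem_union.mp (by exact_mod_cast hx) with h | h
      · exact hA h
      · exact hB h
    all_goals intro x hx; simp_all

/-! ### Consistency, maximal consistent sets -/

/-- Consistency w.r.t. K⊡. -/
def ConS (Γ : Set Form) : Prop := ¬ Deriv NoExt Γ fbot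

/-- Maximal consistent set. -/
def MCS (w : Set Form) : Prop := ConS w ∧ ∀ φ : Form, φ ∈ w ∨ φ.neg ∈ w

namespace MCS

variable {w : Set Form} (hw : MCS w)

include hw

lemma mem_of_deriv {φ : Form} (h : Deriv NoExt w φ) : φ ∈ w := by
  rcases hw.2 φ with h' | h'
  · exact h'
  · exact absurd (Deriv.mp (.mp (.thm (.taut (taut_T4 φ))) h) (.prem h')) hw.1

lemma mem_iff_deriv {φ : Form} : φ ∈ w ↔ Deriv NoExt w φ :=
  ⟨Deriv.prem, hw.mem_of_deriv⟩

lemma notMem_iff_neg {φ : Form} : φ ∉ w ↔ φ.neg ∈ w := by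
  constructor
  · intro h; rcases hw.2 φ with h' | h'
    · exact absurd h' h
    · exact h'
  · intro h h'
    exact hw.1 (Deriv.mp (.mp (.thm (.taut (taut_T4 φ))) (.prem h')) (.prem h))

lemma neg_mem_iff {φ : Form} : φ.neg ∈ w ↔ φ ∉ w := (hw.notMem_iff_neg).symm

lemma mp_mem {φ ψ : Form} (h : φ.imp ψ ∈ w) (h' : φ ∈ w) : ψ ∈ w :=
  hw.mem_of_deriv (.mp (.prem h) (.prem h'))

lemma conj_mem {φ ψ : Form} : φ.conj ψ ∈ w ↔ (φ ∈ w ∧ ψ ∈ w) := by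
  constructor
  · intro h
    exact ⟨hw.mp_mem (hw.mem_of_deriv (.thm (.taut (taut_T7 φ ψ)))) h,
           hw.mp_mem (hw.mem_of_deriv (.thm (.taut (taut_T8 φ ψ)))) h⟩
  · rintro ⟨h1, h2⟩
    exact hw.mem_of_deriv (.mp (.mp (.thm (.taut (taut_T9 φ ψ))) (.prem h1)) (.prem h2))

lemma disj_mem {φ ψ : Form} (h : φ.disj ψ ∈ w) : φ ∈ w ∨ ψ ∈ w := by
  by_cases hφ : φ ∈ w
  · exact Or.inl hφ
  · refine Or.inr (hw.mem_of_deriv ?_)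
    exact .mp (.mp (.thm (.taut (taut_T10 φ ψ))) (.prem h))
      (.prem (hw.notMem_iff_neg.mp hφ))

lemma of_biff {φ ψ : Form} (h : KThm NoExt (φ.biff ψ)) (h' : φ ∈ w) : ψ ∈ w :=
  hw.mem_of_deriv (.mp (.mp (.thm (.taut (taut_T11 φ ψ))) (.thm h)) (.prem h'))

lemma of_biff' {φ ψ : Form} (h : KThm NoExt (φ.biff ψ)) (h' : ψ ∈ w) : φ ∈ w :=
  hw.mem_of_deriv (.mp (.mp (.thm (.taut (taut_T12 φ ψ))) (.thm h)) (.prem h'))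

end MCS

/-! ### Lindenbaum -/

lemma chain_bound {c : Set (Set Form)} (hc : IsChain (· ⊆ ·) c)
    (hne : c.Nonempty) {Γ0 : Finset Form} (hsub : ↑Γ0 ⊆ ⋃₀ c) :
    ∃ m ∈ c, ↑Γ0 ⊆ m := by
  classical
  induction Γ0 using Finset.induction_on with
  | empty => exact ⟨hne.choose, hne.choose_spec, by simp⟩
  | @insert a s ha ih =>
    have hsub' : ↑s ⊆ ⋃₀ c := by
      refine subset_trans ?_ hsub; simp [Finset.coe_insert, Set.subset_insert]
    obtain ⟨m, hm, hms⟩ := ih hsub'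
    have hamem : a ∈ ⋃₀ c := hsub (by simp)
    obtain ⟨m', hm', ham'⟩ := hamem
    rcases hc.total hm hm' with h | h
    · exact ⟨m', hm', by
        intro x hx
        rcases Finset.mem_insert.mp (by exact_mod_cast hx) with rfl | hx'
        · exact ham'
        · exact h (hms hx')⟩
    · exact ⟨m, hm, by
        intro x hx
        rcases Finset.mem_insert.mp (by exact_mod_cast hx) with rfl | hx'
        · exact h ham'
        · exact hms hx'⟩

lemma lindenbaum {Γ : Set Form} (h : ConS Γ) : ∃ w, Γ ⊆ w ∧ MCS w := by
  have hchainH : ∀ c ⊆ {Δ : Set Form | ConS Δ}, IsChain (· ⊆ ·) c → c.Nonempty →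
      ∃ ub ∈ {Δ : Set Form | ConS Δ}, ∀ s ∈ c, s ⊆ ub := by
    intro c hcS hchain hcne
    refine ⟨⋃₀ c, ?_, fun s hs => Set.subset_sUnion_of_mem hs⟩
    intro hbad
    obtain ⟨Γ0, hΓ0, hd⟩ := hbad.finite
    obtain ⟨m, hm, hΓ0m⟩ := chain_bound hchain hcne hΓ0
    exact hcS hm (hd.mono hΓ0m)
  obtain ⟨m, hΓm, hmax⟩ := zorn_subset_nonempty {Δ : Set Form | ConS Δ} hchainH Γ h
  refine ⟨m, hΓm, hmax.prop, ?_⟩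
  intro φ
  by_contra hcon
  push_neg at hcon
  obtain ⟨h1, h2⟩ := hcon
  have key : ∀ ψ : Form, ψ ∉ m → Deriv NoExt m (ψ.imp fbot) := by
    intro ψ hψ
    by_contra hd
    have hins : ConS (insert ψ m) := by
      intro hbad
      exact hd (deduction hbad)
    have := hmax.eq_of_le (y := insert ψ m) hins (Set.subset_insert _ _)
    exact hψ (this ▸ Set.mem_insert _ _)
  have d1 := key φ h1
  have d2 := key φ.neg h2
  exact hmax.prop (Deriv.mp (.mp (.thm (.taut (taut_T5 φ))) d1) d2)
/-! ### The canonical model -/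

/-- The set λ(w) of formulas all of whose "disjunctive boxes" are in w. -/
def lamSet (w : Set Form) : Set Form := {φ | ∀ ψ : Form, Form.box (φ.disj ψ) ∈ w}

lemma top_mem_lam {w : Set Form} (hw : MCS w) : Form.top ∈ lamSet w := by
  intro ψ
  exact hw.of_biff (.re (.taut (taut_T16 ψ))) (hw.mem_of_deriv (.thm .boxTop))

lemma conj_mem_lam {w : Set Form} (hw : MCS w) {a b : Form}
    (ha : a ∈ lamSet w) (hb : b ∈ lamSet w) : a.conj b ∈ lamSet w := by
  intro ψ
  have h1 : Form.box (a.disj ψ) ∈ w := ha ψ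
  have h2 : Form.box (b.disj ψ) ∈ w := hb ψ
  have h3 : Form.box ((a.disj ψ).conj (b.disj ψ)) ∈ w :=
    hw.mem_of_deriv (.mp (.thm (.con _ _))
      (.mp (.mp (.thm (.taut (taut_T9 _ _))) (.prem h1)) (.prem h2)))
  exact hw.of_biff (.re (.taut (taut_T15 a b ψ))) h3

/-- The conjunction of a list of formulas. -/
def conjList : List Form → Form
  | [] => Form.top
  | χ :: l => χ.conj (conjList l)

lemma conjList_mem_lam {w : Set Form} (hw : MCS w) {l : List Form}
    (h : ∀ χ ∈ l, χ ∈ lamSet w) : conjList l ∈ lamSet w := by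
  induction l with
  | nil => exact top_mem_lam hw
  | cons χ l ih =>
    exact conj_mem_lam hw (h χ (by simp)) (ih fun x hx => h x (by simp [hx]))

lemma kthm_conjList_imp {l : List Form} {χ : Form} (h : χ ∈ l) :
    KThm Ext ((conjList l).imp χ) := by
  induction l with
  | nil => simp at h
  | cons a l ih =>
    rcases List.mem_cons.mp h with rfl | h'
    · exact .taut (taut_T7 _ _)
    · exact .mp (.mp (.taut (taut_T17 _ _ _)) (.taut (taut_T8 a (conjList l)))) (ih h')

lemma deriv_list_to_kthm {l : List Form} {ψ : Form}
    (h : Deriv Ext {χ | χ ∈ l} ψ) : KThm Ext ((conjList l).imp ψ) := by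
  have h1 : Deriv Ext (insert (conjList l) ∅) ψ := by
    refine h.cut ?_
    intro χ hχ
    exact .mp (.thm (kthm_conjList_imp hχ)) (.prem (Set.mem_insert _ _))
  exact kthm_of_deriv_empty (deduction h1)

/-- If λ(w) ∪ {a} is inconsistent then ⊡a ∈ w. -/
lemma box_mem_of_incon_pos {w : Set Form} (hw : MCS w) {a : Form}
    (h : Deriv NoExt (insert a (lamSet w)) fbot) : Form.box a ∈ w := by
  have hd : Deriv NoExt (lamSet w) (a.imp fbot) := deduction h
  obtain ⟨Γ0, hΓ0, hd0⟩ := hd.finite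
  have hlist : Deriv NoExt {χ | χ ∈ Γ0.toList} (a.imp fbot) := by
    refine hd0.mono ?_
    intro x hx; simpa using hx
  have hK : KThm NoExt ((conjList Γ0.toList).imp (a.imp fbot)) :=
    deriv_list_to_kthm hlist
  have hC : conjList Γ0.toList ∈ lamSet w := by
    refine conjList_mem_lam hw ?_
    intro χ hχ
    exact hΓ0 (by simpa using hχ)
  have h2 : KThm NoExt (((conjList Γ0.toList).disj a.neg).biff a.neg) :=
    .mp (.taut (taut_T13 _ a)) hK
  have h4 : Form.box ((conjList Γ0.toList).disj a.neg) ∈ w := hC a.neg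
  have h5 : Form.box a.neg ∈ w := hw.of_biff (.re h2) h4
  exact hw.of_biff' (.equ a) h5

/-- If λ(w) ∪ {¬a} is inconsistent then ⊡a ∈ w. -/
lemma box_mem_of_incon_neg {w : Set Form} (hw : MCS w) {a : Form}
    (h : Deriv NoExt (insert a.neg (lamSet w)) fbot) : Form.box a ∈ w := by
  have hd : Deriv NoExt (lamSet w) (a.neg.imp fbot) := deduction h
  obtain ⟨Γ0, hΓ0, hd0⟩ := hd.finite
  have hlist : Deriv NoExt {χ | χ ∈ Γ0.toList} (a.neg.imp fbot) := by
    refine hd0.mono ?_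
    intro x hx; simpa using hx
  have hK : KThm NoExt ((conjList Γ0.toList).imp (a.neg.imp fbot)) :=
    deriv_list_to_kthm hlist
  have hC : conjList Γ0.toList ∈ lamSet w := by
    refine conjList_mem_lam hw ?_
    intro χ hχ
    exact hΓ0 (by simpa using hχ)
  have h2 : KThm NoExt (((conjList Γ0.toList).disj a).biff a) :=
    .mp (.taut (taut_T14 _ a)) hK
  exact hw.of_biff (.re h2) (hC a)

/-- If ⊡a ∈ w then a ∈ λ(w) or ¬a ∈ λ(w). -/
lemma lam_of_box_mem {w : Set Form} (hw : MCS w) {a : Form}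
    (h : Form.box a ∈ w) : a ∈ lamSet w ∨ a.neg ∈ lamSet w := by
  by_cases hall : ∀ ψ : Form, Form.box (a.disj ψ) ∈ w
  · exact Or.inl hall
  · push_neg at hall
    obtain ⟨ψ0, hψ0⟩ := hall
    right
    intro χ
    have hdis : (Form.box (a.disj ψ0)).disj (Form.box (a.neg.disj χ)) ∈ w :=
      hw.mp_mem (hw.mem_of_deriv (.thm (.dis a ψ0 χ))) h
    rcases hw.disj_mem hdis with h' | h'
    · exact absurd h' hψ0
    · exact h'

/-- The canonical model. -/
def canM (hne : ∃ w, MCS w) : BiModel where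
  S := {w : Set Form // MCS w}
  ne := ⟨⟨hne.choose, hne.choose_spec⟩⟩
  R1 := fun w v => lamSet w.1 ⊆ v.1
  R2 := fun w v => lamSet w.1 ⊆ v.1
  V := fun n => {w | Form.var n ∈ w.1}

lemma truth_lemma (hne : ∃ w, MCS w) :
    ∀ (φ : Form) (w : (canM hne).S), sat (canM hne) w φ ↔ φ ∈ w.1 := by
  intro φ
  induction φ with
  | var n => intro w; exact Iff.rfl
  | neg a ih =>
    intro w
    have := w.2.notMem_iff_neg (φ := a)
    simp only [sat, ih]
    exact ⟨fun h => this.mp h, fun h h' => (this.mpr h) h'⟩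
  | conj a b iha ihb =>
    intro w
    simp only [sat, iha, ihb, (w.2.conj_mem).symm]
  | box a ih =>
    intro w
    constructor
    · intro hsat
      by_contra hbox
      have hconpos : ConS (insert a (lamSet w.1)) := by
        intro hbad
        exact hbox (box_mem_of_incon_pos w.2 hbad)
      have hconneg : ConS (insert a.neg (lamSet w.1)) := by
        intro hbad
        exact hbox (box_mem_of_incon_neg w.2 hbad)
      obtain ⟨t, hts, htm⟩ := lindenbaum hconpos
      obtain ⟨u, hus, hum⟩ := lindenbaum hconneg
      have hR1 : lamSet w.1 ⊆ t := fun x hx => hts (Set.mem_insert_of_mem _ hx)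
      have hR2 : lamSet w.1 ⊆ u := fun x hx => hus (Set.mem_insert_of_mem _ hx)
      have hat : a ∈ t := hts (Set.mem_insert _ _)
      have hau : a ∉ u := hum.notMem_iff_neg.mpr (hus (Set.mem_insert _ _))
      have := hsat ⟨t, htm⟩ ⟨u, hum⟩ hR1 hR2
      rw [ih ⟨t, htm⟩, ih ⟨u, hum⟩] at this
      exact hau (this.mp hat)
    · intro hbox t u h1 h2
      rw [ih t, ih u]
      rcases lam_of_box_mem w.2 hbox with h' | h'
      · exact iff_of_true (h1 h') (h2 h')
      · exact iff_of_false (t.2.notMem_iff_neg.mpr (h1 h'))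
          (u.2.notMem_iff_neg.mpr (h2 h'))
/-! ### Soundness -/

lemma sat_imp {M : BiModel} {s : M.S} {a b : Form} :
    sat M s (a.imp b) ↔ (sat M s a → sat M s b) := by
  simp only [Form.imp, sat]; tauto

lemma sat_disj {M : BiModel} {s : M.S} {a b : Form} :
    sat M s (a.disj b) ↔ (sat M s a ∨ sat M s b) := by
  simp only [Form.disj, sat]; tauto

lemma sat_biff {M : BiModel} {s : M.S} {a b : Form} :
    sat M s (a.biff b) ↔ (sat M s a ↔ sat M s b) := by
  simp only [Form.biff, sat, sat_imp]; tauto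

lemma sat_top {M : BiModel} {s : M.S} : sat M s Form.top := by
  rw [Form.top, sat_imp]; exact id

lemma beval_sat {M : BiModel} {s : M.S} (φ : Form) :
    beval (fun ψ => decide (sat M s ψ)) φ = true ↔ sat M s φ := by
  induction φ with
  | var n => simp only [beval, decide_eq_true_iff]
  | neg a ih => simp only [beval, Bool.not_eq_true', sat]; rw [← ih]; simp
  | conj a b iha ihb => simp only [beval, Bool.and_eq_true, iha, ihb, sat]
  | box a => simp only [beval, decide_eq_true_iff]

lemma KThm.sound {φ : Form} (h : KThm NoExt φ) :
    ∀ (M : BiModel) (s : M.S), sat M s φ := by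
  induction h with
  | @taut χ ht =>
    intro M s
    exact (beval_sat χ).mp (ht _)
  | boxTop =>
    intro M s t u _ _
    exact iff_of_true sat_top sat_top
  | equ a =>
    intro M s
    rw [sat_biff]
    constructor
    · intro h t u h1 h2
      have := h t u h1 h2
      simp only [sat]; tauto
    · intro h t u h1 h2
      have := h t u h1 h2
      simp only [sat] at this; tauto
  | con a b =>
    intro M s
    rw [sat_imp]
    rintro ⟨h1, h2⟩ t u ht hu
    have e1 := h1 t u ht hu
    have e2 := h2 t u ht hu
    simp only [sat]; tauto
  | dis a b c =>
    intro M s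
    rw [sat_imp]
    intro h
    by_cases hne : (∃ t, M.R1 s t) ∧ (∃ u, M.R2 s u)
    · obtain ⟨⟨t0, ht0⟩, ⟨u0, hu0⟩⟩ := hne
      by_cases hsa : sat M t0 a
      · rw [sat_disj]
        left
        intro t u ht hu
        have h1 : sat M t a := ((h t u0 ht hu0).trans (h t0 u0 ht0 hu0).symm).mpr hsa
        have h2 : sat M u a := (h t0 u ht0 hu).mp hsa
        rw [sat_disj, sat_disj]
        exact iff_of_true (Or.inl h1) (Or.inl h2)
      · rw [sat_disj]
        right
        intro t u ht hu
        have h1 : ¬ sat M t a := fun hc =>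
          hsa (((h t0 u0 ht0 hu0).trans (h t u0 ht hu0).symm).mpr hc)
        have h2 : ¬ sat M u a := fun hc => hsa ((h t0 u ht0 hu).mpr hc)
        rw [sat_disj, sat_disj]
        exact iff_of_true (Or.inl h1) (Or.inl h2)
    · rw [sat_disj]
      left
      intro t u ht hu
      exact absurd ⟨⟨t, ht⟩, ⟨u, hu⟩⟩ hne
  | ext h => exact absurd h id
  | mp _ _ ih1 ih2 =>
    intro M s
    exact (sat_imp.mp (ih1 M s)) (ih2 M s)
  | @re a b _ ih =>
    intro M s
    rw [sat_biff]
    have key : ∀ t : M.S, sat M t a ↔ sat M t b := fun t => sat_biff.mp (ih M t)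
    constructor
    · intro h t u h1 h2
      rw [← key t, ← key u]; exact h t u h1 h2
    · intro h t u h1 h2
      rw [key t, key u]; exact h t u h1 h2

lemma Deriv.sound {Γ : Set Form} {φ : Form} (h : Deriv NoExt Γ φ) :
    ∀ (M : BiModel) (s : M.S), (∀ γ ∈ Γ, sat M s γ) → sat M s φ := by
  induction h with
  | thm h' => intro M s _; exact h'.sound M s
  | prem h' => intro M s hΓ; exact hΓ _ h'
  | mp _ _ ih1 ih2 =>
    intro M s hΓ
    exact (sat_imp.mp (ih1 M s hΓ)) (ih2 M s hΓ)

end KBox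

/-- K⊡ is sound and strongly complete with respect to the class of all bimodal
frames. -/
theorem stmt12 (Γ : Set Form) (φ : Form) :
    Deriv NoExt Γ φ ↔
      ∀ (M : BiModel) (s : M.S), (∀ γ ∈ Γ, sat M s γ) → sat M s φ := by
  constructor
  · exact fun h => h.sound
  · intro hsem
    by_contra hnd
    have hcon : ConS (insert φ.neg Γ) := by
      intro hbad
      have hded : Deriv NoExt Γ (φ.neg.imp fbot) := deduction hbad
      exact hnd (.mp (.thm (.taut (taut_T6 φ))) hded)
    obtain ⟨w, hsub, hw⟩ := lindenbaum hcon
    have hne : ∃ w, MCS w := ⟨w, hw⟩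
    have hΓ : ∀ γ ∈ Γ, sat (canM hne) ⟨w, hw⟩ γ := fun γ hγ =>
      (truth_lemma hne γ ⟨w, hw⟩).mpr (hsub (Set.mem_insert_of_mem _ hγ))
    have hφ : φ ∈ w :=
      (truth_lemma hne φ ⟨w, hw⟩).mp (hsem (canM hne) ⟨w, hw⟩ hΓ)
    exact hw.notMem_iff_neg.mpr (hsub (Set.mem_insert _ _)) hφ
end

section
/- Every bimodal model is a ⊡-morphic image of some serial bimodal model: for every bimodal model M there exist a serial bimodal model M' and a surjective ⊡-morphism from M' to M. Consequently, the proof system K⊡ is sound and strongly complete with respect to the class of serial bimodal frames: Γ ⊢_{K⊡} φ if and only if every pointed serial bimodal model satisfying all formulas of Γ also satisfies φ. -/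
/-- A model is serial if both relations are serial. -/
def SerialM (M : BiModel) : Prop := (∀ s, ∃ t, M.R1 s t) ∧ (∀ s, ∃ t, M.R2 s t)

/-- f is a ⊡-morphism from M to M': it respects the valuation (Var) and
satisfies the (Forth) and (Back) conditions. -/
def IsMorphism (M M' : BiModel) (f : M.S → M'.S) : Prop :=
  (∀ (p : ℕ) (x : M.S), x ∈ M.V p ↔ f x ∈ M'.V p) ∧
  (∀ x y z : M.S, M.R1 x y → M.R2 x z → f y ≠ f z →
    M'.R1 (f x) (f y) ∧ M'.R2 (f x) (f z)) ∧
  (∀ (x : M.S) (y' z' : M'.S), M'.R1 (f x) y' → M'.R2 (f x) z' → y' ≠ z' →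
    ∃ y z : M.S, M.R1 x y ∧ M.R2 x z ∧ f y = y' ∧ f z = z')

open Classical

namespace KP

abbrev Thm (φ : Form) : Prop := KThm NoExt φ
abbrev Der (Γ : Set Form) (φ : Form) : Prop := Deriv NoExt Γ φ
def Fbot : Form := Form.neg Form.top
def Con (Γ : Set Form) : Prop := ¬ Der Γ Fbot

-- basic tautologies
lemma t_k (a b : Form) : Thm (a.imp (b.imp a)) := KThm.taut (by
  intro v; simp only [Form.imp, beval]
  cases beval v a <;> cases beval v b <;> rfl)

lemma t_s (a b c : Form) : Thm ((a.imp (b.imp c)).imp ((a.imp b).imp (a.imp c))) := KThm.taut (by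
  intro v; simp only [Form.imp, beval]
  cases beval v a <;> cases beval v b <;> cases beval v c <;> rfl)

lemma t_id (a : Form) : Thm (a.imp a) := KThm.taut (by
  intro v; simp only [Form.imp, beval]
  cases beval v a <;> rfl)

lemma beval_top (v : Form → Bool) : beval v Form.top = true := by
  simp only [Form.top, Form.imp, beval]
  cases v (Form.var 0) <;> rfl

lemma t_top : Thm Form.top := KThm.taut (fun v => beval_top v)

lemma t_combine (a : Form) : Thm ((a.imp Fbot).imp ((a.neg.imp Fbot).imp Fbot)) := KThm.taut (by
  intro v; simp only [Form.imp, Form.top, Fbot, beval]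
  cases beval v a <;> cases v (Form.var 0) <;> rfl)

lemma t_absurd (a : Form) : Thm (a.imp (a.neg.imp Fbot)) := KThm.taut (by
  intro v; simp only [Form.imp, Form.top, Fbot, beval]
  cases beval v a <;> cases v (Form.var 0) <;> rfl)

lemma t_conj1 (a b : Form) : Thm ((a.conj b).imp a) := KThm.taut (by
  intro v; simp only [Form.imp, beval]
  cases beval v a <;> cases beval v b <;> rfl)

lemma t_conj2 (a b : Form) : Thm ((a.conj b).imp b) := KThm.taut (by
  intro v; simp only [Form.imp, beval]
  cases beval v a <;> cases beval v b <;> rfl)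

lemma t_conj_intro (a b : Form) : Thm (a.imp (b.imp (a.conj b))) := KThm.taut (by
  intro v; simp only [Form.imp, beval]
  cases beval v a <;> cases beval v b <;> rfl)

lemma t_biff1 (a b : Form) : Thm ((a.biff b).imp (a.imp b)) := KThm.taut (by
  intro v; simp only [Form.imp, Form.biff, beval]
  cases beval v a <;> cases beval v b <;> rfl)

lemma t_biff2 (a b : Form) : Thm ((a.biff b).imp (b.imp a)) := KThm.taut (by
  intro v; simp only [Form.imp, Form.biff, beval]
  cases beval v a <;> cases beval v b <;> rfl)

lemma t_disj_elim (a b : Form) : Thm ((a.disj b).imp (a.neg.imp b)) := KThm.taut (by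
  intro v; simp only [Form.imp, Form.disj, beval]
  cases beval v a <;> cases beval v b <;> rfl)

-- derivability basics
lemma der_mono {Γ Δ : Set Form} (h : Γ ⊆ Δ) {φ : Form} (hd : Der Γ φ) : Der Δ φ := by
  induction hd with
  | thm h' => exact Deriv.thm h'
  | prem h' => exact Deriv.prem (h h')
  | mp _ _ ih1 ih2 => exact Deriv.mp ih1 ih2

lemma deduction {Γ : Set Form} {φ ψ : Form} (h : Der (insert φ Γ) ψ) : Der Γ (φ.imp ψ) := by
  induction h with
  | @thm χ h' => exact Deriv.mp (Deriv.thm (t_k χ φ)) (Deriv.thm h')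
  | @prem χ h' =>
    rcases h' with h2 | h2
    · cases h2; exact Deriv.thm (t_id _)
    · exact Deriv.mp (Deriv.thm (t_k χ φ)) (Deriv.prem h2)
  | @mp α β _ _ ih1 ih2 =>
    exact Deriv.mp (Deriv.mp (Deriv.thm (t_s φ α β)) ih1) ih2

def listConj (l : List Form) : Form := l.foldr Form.conj Form.top

lemma t_imp_top (a : Form) : Thm (a.imp Form.top) := KThm.taut (by
  intro v; simp only [Form.imp, Form.top, beval]
  cases beval v a <;> cases v (Form.var 0) <;> rfl)

lemma t_conj_mono (a p q : Form) : Thm ((p.imp q).imp ((a.conj p).imp (a.conj q))) := KThm.taut (by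
  intro v; simp only [Form.imp, beval]
  cases beval v a <;> cases beval v p <;> cases beval v q <;> rfl)

lemma t_conj_weak (a p q : Form) : Thm ((p.imp q).imp ((a.conj p).imp q)) := KThm.taut (by
  intro v; simp only [Form.imp, beval]
  cases beval v a <;> cases beval v p <;> cases beval v q <;> rfl)

lemma listConj_append_left (l1 l2 : List Form) :
    Thm ((listConj (l1 ++ l2)).imp (listConj l1)) := by
  induction l1 with
  | nil => exact t_imp_top _
  | cons a l ih => exact KThm.mp (t_conj_mono a _ _) ih

lemma listConj_append_right (l1 l2 : List Form) :
    Thm ((listConj (l1 ++ l2)).imp (listConj l2)) := by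
  induction l1 with
  | nil => exact t_id _
  | cons a l ih => exact KThm.mp (t_conj_weak a _ _) ih

lemma t_combine4 (A P Q a b : Form) :
    Thm ((A.imp P).imp ((A.imp Q).imp ((P.imp (a.imp b)).imp ((Q.imp a).imp (A.imp b))))) :=
  KThm.taut (by
    intro v; simp only [Form.imp, beval]
    cases beval v A <;> cases beval v P <;> cases beval v Q <;>
      cases beval v a <;> cases beval v b <;> rfl)

lemma der_list {Γ : Set Form} {ψ : Form} (h : Der Γ ψ) :
    ∃ l : List Form, (∀ a ∈ l, a ∈ Γ) ∧ Thm ((listConj l).imp ψ) := by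
  induction h with
  | @thm χ h' =>
      exact ⟨[], by simp, KThm.mp (t_k χ Form.top) h'⟩
  | @prem χ h' =>
      refine ⟨[χ], by simpa using h', ?_⟩
      exact t_conj1 χ Form.top
  | @mp a b _ _ ih1 ih2 =>
      obtain ⟨l1, hl1, h1⟩ := ih1
      obtain ⟨l2, hl2, h2⟩ := ih2
      refine ⟨l1 ++ l2, ?_, ?_⟩
      · intro x hx; rcases List.mem_append.mp hx with hx | hx
        · exact hl1 x hx
        · exact hl2 x hx
      · exact KThm.mp (KThm.mp (KThm.mp (KThm.mp
          (t_combine4 (listConj (l1 ++ l2)) (listConj l1) (listConj l2) a b)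
          (listConj_append_left l1 l2)) (listConj_append_right l1 l2)) h1) h2

lemma der_listConj {Γ : Set Form} {l : List Form} (h : ∀ a ∈ l, a ∈ Γ) :
    Der Γ (listConj l) := by
  induction l with
  | nil => exact Deriv.thm t_top
  | cons a l ih =>
      have ha : Der Γ a := Deriv.prem (h a (by simp))
      have hl : Der Γ (listConj l) := ih (fun x hx => h x (by simp [hx]))
      exact Deriv.mp (Deriv.mp (Deriv.thm (t_conj_intro a (listConj l))) ha) hl

lemma con_insert_of_not_der {Γ : Set Form} {φ : Form} (h : ¬ Der Γ φ) :
    Con (insert (Form.neg φ) Γ) := by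
  intro hbot
  have h1 : Der Γ (Form.neg φ |>.imp Fbot) := deduction hbot
  -- (¬φ → ⊥) → φ   is a tautology
  have h2 : Thm (((Form.neg φ).imp Fbot).imp φ) := KThm.taut (by
    intro v; simp only [Form.imp, Form.top, Fbot, beval]
    cases beval v φ <;> cases v (Form.var 0) <;> rfl)
  exact h (Deriv.mp (Deriv.thm h2) h1)

/-- Lindenbaum: every consistent set extends to a complete consistent set. -/
lemma lindenbaum {Γ : Set Form} (h : Con Γ) :
    ∃ Sg : Set Form, Γ ⊆ Sg ∧ Con Sg ∧ ∀ φ, φ ∈ Sg ∨ Form.neg φ ∈ Sg := by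
  have hz := zorn_subset_nonempty {Δ : Set Form | Γ ⊆ Δ ∧ Con Δ} ?_ Γ ⟨subset_rfl, h⟩
  · obtain ⟨m, hm⟩ := hz
    obtain ⟨-, hmax⟩ := hm
    obtain ⟨hΓm, hCon⟩ := hmax.prop
    refine ⟨m, hΓm, hCon, ?_⟩
    intro φ
    by_contra hc
    push_neg at hc
    obtain ⟨h1, h2⟩ := hc
    -- both extensions inconsistent
    have c1 : ¬ Con (insert φ m) := by
      intro hcon
      have := hmax.eq_of_subset ⟨hΓm.trans (Set.subset_insert _ _), hcon⟩ (Set.subset_insert _ _)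
      exact h1 (this ▸ Set.mem_insert _ _)
    have c2 : ¬ Con (insert (Form.neg φ) m) := by
      intro hcon
      have := hmax.eq_of_subset ⟨hΓm.trans (Set.subset_insert _ _), hcon⟩ (Set.subset_insert _ _)
      exact h2 (this ▸ Set.mem_insert _ _)
    have d1 : Der m (φ.imp Fbot) := deduction (by simpa [Con, not_not] using c1)
    have d2 : Der m ((Form.neg φ).imp Fbot) := deduction (by simpa [Con, not_not] using c2)
    exact hCon (Deriv.mp (Deriv.mp (Deriv.thm (t_combine φ)) d1) d2)
  · -- chains
    intro c hc hchain hne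
    refine ⟨⋃₀ c, ⟨?_, ?_⟩, fun s hs => Set.subset_sUnion_of_mem hs⟩
    · obtain ⟨D, hD⟩ := hne
      exact (hc hD).1.trans (Set.subset_sUnion_of_mem hD)
    · intro hbot
      obtain ⟨l, hl, hthm⟩ := der_list hbot
      -- find a single member of the chain containing all of l
      obtain ⟨D, hD⟩ := hne
      have : ∃ E ∈ c, ∀ a ∈ l, a ∈ E := by
        clear hthm
        induction l with
        | nil => exact ⟨D, hD, by simp⟩
        | cons a l ih =>
            have ha := hl a (by simp)
            obtain ⟨E, hE, hEl⟩ := ih (fun x hx => hl x (by simp [hx]))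
            obtain ⟨F, hF, haF⟩ := ha
            rcases hchain.total hE hF with hEF | hFE
            · exact ⟨F, hF, fun x hx => by
                rcases List.mem_cons.mp hx with rfl | hx
                · exact haF
                · exact hEF (hEl x hx)⟩
            · exact ⟨E, hE, fun x hx => by
                rcases List.mem_cons.mp hx with rfl | hx
                · exact hFE haF
                · exact hEl x hx⟩
      obtain ⟨E, hEc, hEl⟩ := this
      exact (hc hEc).2 (Deriv.mp (Deriv.thm hthm) (der_listConj hEl))
/-- Maximal consistent sets. -/
structure MCS : Type where
  s : Set Form
  con : Con s
  comp : ∀ φ : Form, φ ∈ s ∨ Form.neg φ ∈ s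

namespace MCS

variable (W : MCS)

lemma mem_of_der {φ : Form} (h : Der W.s φ) : φ ∈ W.s := by
  rcases W.comp φ with h' | h'
  · exact h'
  · exact absurd (Deriv.mp (Deriv.mp (Deriv.thm (t_absurd φ)) h) (Deriv.prem h')) W.con

lemma thm_mem {φ : Form} (h : Thm φ) : φ ∈ W.s := W.mem_of_der (Deriv.thm h)

lemma mp_mem {φ ψ : Form} (h : φ ∈ W.s) (himp : Thm (φ.imp ψ)) : ψ ∈ W.s :=
  W.mem_of_der (Deriv.mp (Deriv.thm himp) (Deriv.prem h))

lemma not_mem_of_neg_mem {φ : Form} (h : Form.neg φ ∈ W.s) : φ ∉ W.s := by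
  intro h'
  exact W.con (Deriv.mp (Deriv.mp (Deriv.thm (t_absurd φ)) (Deriv.prem h')) (Deriv.prem h))

lemma neg_mem_iff {φ : Form} : Form.neg φ ∈ W.s ↔ φ ∉ W.s := by
  constructor
  · exact W.not_mem_of_neg_mem
  · intro h; rcases W.comp φ with h' | h'
    · exact absurd h' h
    · exact h'

lemma conj_mem {φ ψ : Form} (h1 : φ ∈ W.s) (h2 : ψ ∈ W.s) : φ.conj ψ ∈ W.s :=
  W.mem_of_der (Deriv.mp (Deriv.mp (Deriv.thm (t_conj_intro φ ψ)) (Deriv.prem h1)) (Deriv.prem h2))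

lemma biff_mem_iff {φ ψ : Form} (h : Thm (φ.biff ψ)) : φ ∈ W.s ↔ ψ ∈ W.s :=
  ⟨fun h' => W.mp_mem h' (KThm.mp (t_biff1 φ ψ) h),
   fun h' => W.mp_mem h' (KThm.mp (t_biff2 φ ψ) h)⟩

lemma disj_elim_mem {φ ψ : Form} (h : φ.disj ψ ∈ W.s) : φ ∈ W.s ∨ ψ ∈ W.s := by
  rcases W.comp φ with h' | h'
  · exact Or.inl h'
  · refine Or.inr (W.mem_of_der ?_)
    exact Deriv.mp (Deriv.mp (Deriv.thm (t_disj_elim φ ψ)) (Deriv.prem h)) (Deriv.prem h')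

/-- The set of formulas ψ with ⊡ψ ∈ W. -/
def B : Set Form := {ψ | Form.box ψ ∈ W.s}

lemma b_top : Form.top ∈ W.B := W.thm_mem KThm.boxTop

lemma b_neg_iff {ψ : Form} : Form.neg ψ ∈ W.B ↔ ψ ∈ W.B :=
  (W.biff_mem_iff (KThm.equ ψ)).symm

lemma b_conj {φ ψ : Form} (h1 : φ ∈ W.B) (h2 : ψ ∈ W.B) : φ.conj ψ ∈ W.B :=
  W.mp_mem (W.conj_mem h1 h2) (KThm.con φ ψ)

lemma b_equiv {φ ψ : Form} (h : Thm (φ.biff ψ)) : φ ∈ W.B ↔ ψ ∈ W.B :=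
  W.biff_mem_iff (KThm.re h)

lemma b_dis {ψ : Form} (h : ψ ∈ W.B) (α β : Form) :
    ψ.disj α ∈ W.B ∨ (Form.neg ψ).disj β ∈ W.B :=
  W.disj_elim_mem (W.mp_mem h (KThm.dis ψ α β))

lemma b_disj {φ ψ : Form} (h1 : φ ∈ W.B) (h2 : ψ ∈ W.B) : φ.disj ψ ∈ W.B := by
  show Form.neg ((Form.neg φ).conj (Form.neg ψ)) ∈ W.B
  exact W.b_neg_iff.mpr (W.b_conj (W.b_neg_iff.mpr h1) (W.b_neg_iff.mpr h2))

/-- W is degenerate if every formula is boxed in W. -/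
def Deg : Prop := ∀ ψ : Form, ψ ∈ W.B

def NonNarrow (u : Form) : Prop := ∀ x : Form, Thm (u.imp x) → x ∈ W.B

/-- The "ultrafilter" of non-narrow elements of B. -/
def U : Set Form := {u | u ∈ W.B ∧ W.NonNarrow u}

end MCS

-- tautological equivalences
lemma tE_imp_disj (a b : Form) : Thm ((a.imp b).imp ((a.disj b).biff b)) := KThm.taut (by
  intro v; simp only [Form.imp, Form.disj, Form.biff, beval]
  cases beval v a <;> cases beval v b <;> rfl)

lemma tE1 (p a : Form) : Thm (((p.disj a).conj ((Form.neg p).disj a)).biff a) := KThm.taut (by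
  intro v; simp only [Form.imp, Form.disj, Form.biff, beval]
  cases beval v p <;> cases beval v a <;> rfl)

lemma tE_negneg (a x : Form) : Thm ((((Form.neg a).neg).disj x).biff (a.disj x)) := KThm.taut (by
  intro v; simp only [Form.imp, Form.disj, Form.biff, beval]
  cases beval v a <;> cases beval v x <;> rfl)

lemma tE3a (u v x : Form) : Thm (((u.conj v).imp x).imp (u.imp (x.disj (Form.neg v)))) := KThm.taut (by
  intro w; simp only [Form.imp, Form.disj, beval]
  cases beval w u <;> cases beval w v <;> cases beval w x <;> rfl)

lemma tE3b (u v x : Form) : Thm (((u.conj v).imp x).imp (v.imp (x.disj (Form.neg u)))) := KThm.taut (by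
  intro w; simp only [Form.imp, Form.disj, beval]
  cases beval w u <;> cases beval w v <;> cases beval w x <;> rfl)

lemma tE4 (u v x : Form) :
    Thm (((x.disj (Form.neg v)).conj (x.disj (Form.neg u))).biff (x.disj (Form.neg (u.disj v)))) := KThm.taut (by
  intro w; simp only [Form.imp, Form.disj, Form.biff, beval]
  cases beval w u <;> cases beval w v <;> cases beval w x <;> rfl)

lemma tE5 (u v x : Form) :
    Thm (x.biff ((x.disj (Form.neg (u.disj v))).conj ((u.disj v).disj x))) := KThm.taut (by
  intro w; simp only [Form.imp, Form.disj, Form.biff, beval]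
  cases beval w u <;> cases beval w v <;> cases beval w x <;> rfl)

lemma tE6 (u v χ : Form) :
    Thm (u.imp ((Form.neg ((Form.neg (u.disj v)).disj χ)).disj χ)) := KThm.taut (by
  intro w; simp only [Form.imp, Form.disj, beval]
  cases beval w u <;> cases beval w v <;> cases beval w χ <;> rfl)

lemma tE7 (u v χ : Form) :
    Thm (χ.biff (((Form.neg ((Form.neg (u.disj v)).disj χ)).disj χ).conj ((Form.neg (u.disj v)).disj χ))) := KThm.taut (by
  intro w; simp only [Form.imp, Form.disj, Form.biff, beval]
  cases beval w u <;> cases beval w v <;> cases beval w χ <;> rfl)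

lemma tE8 (w φ : Form) : Thm ((w.imp (φ.imp Fbot)).imp (w.imp (Form.neg φ))) := KThm.taut (by
  intro v; simp only [Form.imp, Form.top, Fbot, beval]
  cases beval v w <;> cases beval v φ <;> cases v (Form.var 0) <;> rfl)

lemma t_thm_biff_top (x : Form) : Thm (x.imp (x.biff Form.top)) := KThm.taut (by
  intro v; simp only [Form.imp, Form.biff, Form.top, beval]
  cases beval v x <;> cases v (Form.var 0) <;> rfl)

namespace MCS
variable (W : MCS)

lemma not_both_narrow (hnd : ¬ W.Deg) {ψ : Form} (hψ : ψ ∈ W.B) :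
    W.NonNarrow ψ ∨ W.NonNarrow (Form.neg ψ) := by
  by_contra hc
  push_neg at hc
  obtain ⟨h1, h2⟩ := hc
  simp only [NonNarrow, not_forall] at h1 h2
  obtain ⟨x, hx, hxB⟩ := h1
  obtain ⟨y, hy, hyB⟩ := h2
  have step1 : ∀ α, ψ.disj α ∈ W.B := by
    intro α
    rcases W.b_dis hψ α y with h | h
    · exact h
    · exact absurd ((W.b_equiv (KThm.mp (tE_imp_disj (Form.neg ψ) y) hy)).mp h) hyB
  have hnegψ : Form.neg ψ ∈ W.B := W.b_neg_iff.mpr hψ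
  have step2 : ∀ α, (Form.neg ψ).disj α ∈ W.B := by
    intro α
    rcases W.b_dis hnegψ α x with h | h
    · exact h
    · have h' : ψ.disj x ∈ W.B := (W.b_equiv (tE_negneg ψ x)).mp h
      exact absurd ((W.b_equiv (KThm.mp (tE_imp_disj ψ x) hx)).mp h') hxB
  exact hnd (fun α => (W.b_equiv (tE1 ψ α)).mp (W.b_conj (step1 α) (step2 α)))

lemma u_conj (hnd : ¬ W.Deg) {u v : Form} (hu : u ∈ W.U) (hv : v ∈ W.U) :
    u.conj v ∈ W.U := by
  refine ⟨W.b_conj hu.1 hv.1, ?_⟩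
  intro x hx
  have h1 : x.disj (Form.neg v) ∈ W.B := hu.2 _ (KThm.mp (tE3a u v x) hx)
  have h2 : x.disj (Form.neg u) ∈ W.B := hv.2 _ (KThm.mp (tE3b u v x) hx)
  have h3 : x.disj (Form.neg (u.disj v)) ∈ W.B := (W.b_equiv (tE4 u v x)).mp (W.b_conj h1 h2)
  have hc : u.disj v ∈ W.B := W.b_disj hu.1 hv.1
  by_cases hA : (u.disj v).disj x ∈ W.B
  · exact (W.b_equiv (tE5 u v x)).mpr (W.b_conj h3 hA)
  · have hall : ∀ β, (Form.neg (u.disj v)).disj β ∈ W.B := by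
      intro β
      rcases W.b_dis hc x β with h | h
      · exact absurd h hA
      · exact h
    exfalso
    apply hnd
    intro χ
    have hd : (Form.neg ((Form.neg (u.disj v)).disj χ)).disj χ ∈ W.B := hu.2 _ (tE6 u v χ)
    exact (W.b_equiv (tE7 u v χ)).mpr (W.b_conj hd (hall χ))

lemma top_mem_U : Form.top ∈ W.U := by
  refine ⟨W.b_top, ?_⟩
  intro x hx
  have hthm : Thm x := KThm.mp hx t_top
  exact (W.b_equiv (KThm.mp (t_thm_biff_top x) hthm)).mpr W.b_top

lemma listConj_mem_U (hnd : ¬ W.Deg) {l : List Form} (h : ∀ a ∈ l, a ∈ W.U) :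
    listConj l ∈ W.U := by
  induction l with
  | nil => exact W.top_mem_U
  | cons a l ih =>
      exact W.u_conj hnd (h a (by simp)) (ih (fun x hx => h x (by simp [hx])))

lemma con_U_insert (hnd : ¬ W.Deg) {φ : Form} (hφ : φ ∉ W.B) :
    Con (insert φ W.U) := by
  intro hbot
  have hd : Der W.U (φ.imp Fbot) := deduction hbot
  obtain ⟨l, hl, hthm⟩ := der_list hd
  have hw : listConj l ∈ W.U := W.listConj_mem_U hnd hl
  have hneg : Form.neg φ ∈ W.B := hw.2 _ (KThm.mp (tE8 (listConj l) φ) hthm)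
  exact hφ (W.b_neg_iff.mp hneg)

end MCS
/-- The canonical model. -/
def canModel (W0 : MCS) : BiModel where
  S := MCS
  ne := ⟨W0⟩
  R1 := fun W t => ¬ W.Deg → ∀ u ∈ W.U, u ∈ t.s
  R2 := fun W t => ¬ W.Deg ∧ ∀ u ∈ W.U, u ∈ t.s
  V := fun n => {W : MCS | Form.var n ∈ W.s}

lemma truth_lemma (W0 : MCS) : ∀ (φ : Form) (W : MCS),
    sat (canModel W0) W φ ↔ φ ∈ W.s := by
  intro φ
  induction φ with
  | var n => intro W; exact Iff.rfl
  | neg ψ ih =>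
      intro W
      show ¬ sat (canModel W0) W ψ ↔ _
      rw [ih W, ← W.neg_mem_iff]
  | conj ψ χ ih1 ih2 =>
      intro W
      show (sat (canModel W0) W ψ ∧ sat (canModel W0) W χ) ↔ _
      rw [ih1 W, ih2 W]
      constructor
      · intro ⟨h1, h2⟩; exact W.conj_mem h1 h2
      · intro h
        exact ⟨W.mp_mem h (t_conj1 ψ χ), W.mp_mem h (t_conj2 ψ χ)⟩
  | box ψ ih =>
      intro W
      by_cases hdeg : W.Deg
      · constructor
        · intro _; exact hdeg ψ
        · intro _ t u _ h2
          exact absurd hdeg h2.1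
      · constructor
        · -- sat → box ψ ∈ W
          intro hsat
          by_contra hb
          have hψB : ψ ∉ W.B := hb
          have hψnB : Form.neg ψ ∉ W.B := fun h => hb (W.b_neg_iff.mp h)
          obtain ⟨St, hSt1, hSt2, hSt3⟩ := lindenbaum (W.con_U_insert hdeg hψB)
          obtain ⟨Su, hSu1, hSu2, hSu3⟩ := lindenbaum (W.con_U_insert hdeg hψnB)
          set t : MCS := ⟨St, hSt2, hSt3⟩
          set u : MCS := ⟨Su, hSu2, hSu3⟩
          have hR1 : (canModel W0).R1 W t := fun _ => fun x hx => hSt1 (Set.mem_insert_of_mem _ hx)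
          have hR2 : (canModel W0).R2 W u := ⟨hdeg, fun x hx => hSu1 (Set.mem_insert_of_mem _ hx)⟩
          have := hsat t u hR1 hR2
          rw [ih t, ih u] at this
          have hψt : ψ ∈ t.s := hSt1 (Set.mem_insert _ _)
          have hψu : ψ ∉ u.s := u.not_mem_of_neg_mem (hSu1 (Set.mem_insert _ _))
          exact hψu (this.mp hψt)
        · intro hb t u h1 h2
          rw [ih t, ih u]
          have hU := h1 hdeg
          have hU' := h2.2
          rcases W.not_both_narrow hdeg hb with hn | hn
          · have h3 : ψ ∈ t.s := hU ψ ⟨hb, hn⟩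
            have h4 : ψ ∈ u.s := hU' ψ ⟨hb, hn⟩
            exact iff_of_true h3 h4
          · have hnB : Form.neg ψ ∈ W.B := W.b_neg_iff.mpr hb
            have h3 : ψ ∉ t.s := t.not_mem_of_neg_mem (hU _ ⟨hnB, hn⟩)
            have h4 : ψ ∉ u.s := u.not_mem_of_neg_mem (hU' _ ⟨hnB, hn⟩)
            exact iff_of_false h3 h4
/-- Adding loops at worlds lacking successors yields a serial model. -/
def serialize (M : BiModel) : BiModel where
  S := M.S
  ne := M.ne
  R1 := fun x y => (((∃ t, M.R1 x t) ∧ (∃ u, M.R2 x u)) ∧ M.R1 x y) ∨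
    (¬ ((∃ t, M.R1 x t) ∧ (∃ u, M.R2 x u)) ∧ y = x)
  R2 := fun x y => (((∃ t, M.R1 x t) ∧ (∃ u, M.R2 x u)) ∧ M.R2 x y) ∨
    (¬ ((∃ t, M.R1 x t) ∧ (∃ u, M.R2 x u)) ∧ y = x)
  V := M.V

lemma part1 (M : BiModel) : ∃ (M' : BiModel) (f : M'.S → M.S),
    SerialM M' ∧ Function.Surjective f ∧ IsMorphism M' M f := by
  refine ⟨serialize M, id, ⟨?_, ?_⟩, fun y => ⟨y, rfl⟩, ?_, ?_, ?_⟩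
  · intro s
    by_cases hc : (∃ t, M.R1 s t) ∧ (∃ u, M.R2 s u)
    · obtain ⟨t, ht⟩ := hc.1
      exact ⟨t, Or.inl ⟨hc, ht⟩⟩
    · exact ⟨s, Or.inr ⟨hc, rfl⟩⟩
  · intro s
    by_cases hc : (∃ t, M.R1 s t) ∧ (∃ u, M.R2 s u)
    · obtain ⟨u, hu⟩ := hc.2
      exact ⟨u, Or.inl ⟨hc, hu⟩⟩
    · exact ⟨s, Or.inr ⟨hc, rfl⟩⟩
  · intro p x; exact Iff.rfl
  · intro x y z h1 h2 hne
    rcases h1 with ⟨hc, h1⟩ | ⟨hc, rfl⟩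
    · rcases h2 with ⟨-, h2⟩ | ⟨hc2, rfl⟩
      · exact ⟨h1, h2⟩
      · exact absurd hc hc2
    · rcases h2 with ⟨hc2, h2⟩ | ⟨-, rfl⟩
      · exact absurd hc2 hc
      · exact absurd rfl hne
  · intro x y' z' h1 h2 _
    have hc : (∃ t, M.R1 x t) ∧ (∃ u, M.R2 x u) := ⟨⟨y', h1⟩, ⟨z', h2⟩⟩
    exact ⟨y', z', Or.inl ⟨hc, h1⟩, Or.inl ⟨hc, h2⟩, rfl, rfl⟩

/-- ⊡-morphisms preserve truth. -/
lemma sat_morph {N M : BiModel} {f : N.S → M.S} (h : IsMorphism N M f) :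
    ∀ (φ : Form) (x : N.S), sat N x φ ↔ sat M (f x) φ := by
  obtain ⟨hV, hF, hB⟩ := h
  intro φ
  induction φ with
  | var n => exact fun x => hV n x
  | neg ψ ih => exact fun x => not_congr (ih x)
  | conj ψ χ ih1 ih2 => exact fun x => and_congr (ih1 x) (ih2 x)
  | box ψ ih =>
      intro x
      constructor
      · intro hs t' u' h1 h2
        by_cases he : t' = u'
        · subst he; exact Iff.rfl
        · obtain ⟨y, z, hy, hz, hfy, hfz⟩ := hB x t' u' h1 h2 he
          subst hfy; subst hfz
          exact (ih y).symm.trans ((hs y z hy hz).trans (ih z))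
      · intro hs t u h1 h2
        by_cases he : f t = f u
        · rw [ih t, ih u, he]
        · obtain ⟨hr1, hr2⟩ := hF x t u h1 h2 he
          exact (ih t).trans ((hs _ _ hr1 hr2).trans (ih u).symm)
lemma sat_imp {M : BiModel} {s : M.S} {a b : Form} :
    sat M s (a.imp b) ↔ (sat M s a → sat M s b) := by
  simp only [Form.imp, sat]; tauto

lemma sat_disj {M : BiModel} {s : M.S} {a b : Form} :
    sat M s (a.disj b) ↔ (sat M s a ∨ sat M s b) := by
  simp only [Form.disj, sat]; tauto

lemma sat_biff {M : BiModel} {s : M.S} {a b : Form} :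
    sat M s (a.biff b) ↔ (sat M s a ↔ sat M s b) := by
  simp only [Form.biff, Form.imp, sat]; tauto

lemma beval_sat (M : BiModel) (s : M.S) :
    ∀ φ : Form, beval (fun ψ => if sat M s ψ then true else false) φ = true ↔ sat M s φ := by
  intro φ
  induction φ with
  | var n => simp only [beval]; split <;> simp_all
  | neg ψ ih => simp only [beval, sat, Bool.not_eq_true']; rw [← ih]; simp
  | conj ψ χ ih1 ih2 => simp only [beval, sat, Bool.and_eq_true]; rw [ih1, ih2]
  | box ψ ih =>
      simp only [beval]
      split
      · rename_i h; simpa using h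
      · rename_i h; simpa using h

lemma thm_sound {φ : Form} (h : Thm φ) :
    ∀ M : BiModel, SerialM M → ∀ s : M.S, sat M s φ := by
  induction h with
  | @taut ψ h' =>
      intro M _ s
      exact (beval_sat M s ψ).mp (h' _)
  | boxTop =>
      intro M _ s t u _ _
      have htop : ∀ w : M.S, sat M w Form.top := by
        intro w
        show ¬ (sat M w (Form.var 0) ∧ ¬ sat M w (Form.var 0))
        tauto
      exact iff_of_true (htop t) (htop u)
  | equ ψ =>
      intro M _ s
      rw [sat_biff]
      constructor
      · intro hb t u h1 h2
        show (¬ _) ↔ (¬ _)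
        exact not_congr (hb t u h1 h2)
      · intro hb t u h1 h2
        have := hb t u h1 h2
        exact not_iff_not.mp this
  | con ψ χ =>
      intro M _ s
      rw [sat_imp]
      intro hc t u h1 h2
      exact and_congr (hc.1 t u h1 h2) (hc.2 t u h1 h2)
  | dis ψ χ ρ =>
      intro M hser s
      rw [sat_imp]
      intro hbox
      rw [sat_disj]
      obtain ⟨t0, ht0⟩ := hser.1 s
      obtain ⟨u0, hu0⟩ := hser.2 s
      by_cases hc : sat M u0 ψ
      · left
        intro t u h1 h2
        have h3 : sat M t ψ := (hbox t u0 h1 hu0).mpr hc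
        have h4 : sat M u ψ := (hbox t0 u ht0 h2).mp ((hbox t0 u0 ht0 hu0).mpr hc)
        exact iff_of_true (sat_disj.mpr (Or.inl h3)) (sat_disj.mpr (Or.inl h4))
      · right
        intro t u h1 h2
        have h3 : ¬ sat M t ψ := fun h => hc ((hbox t u0 h1 hu0).mp h)
        have h4 : ¬ sat M u ψ := fun h => hc ((hbox t0 u0 ht0 hu0).mp ((hbox t0 u ht0 h2).mpr h))
        exact iff_of_true (sat_disj.mpr (Or.inl h3)) (sat_disj.mpr (Or.inl h4))
  | ext h' => exact absurd h' (fun h => h)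
  | @mp ψ χ _ _ ih1 ih2 =>
      intro M hser s
      exact (sat_imp.mp (ih1 M hser s)) (ih2 M hser s)
  | @re ψ χ _ ih =>
      intro M hser s
      rw [sat_biff]
      have heq : ∀ w : M.S, sat M w ψ ↔ sat M w χ := fun w => sat_biff.mp (ih M hser w)
      constructor
      · intro hb t u h1 h2
        rw [← heq t, ← heq u]
        exact hb t u h1 h2
      · intro hb t u h1 h2
        rw [heq t, heq u]
        exact hb t u h1 h2

lemma der_sound {Γ : Set Form} {φ : Form} (h : Der Γ φ) :
    ∀ M : BiModel, SerialM M → ∀ s : M.S, (∀ γ ∈ Γ, sat M s γ) → sat M s φ := by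
  induction h with
  | thm h' => intro M hser s _; exact thm_sound h' M hser s
  | prem h' => intro M hser s hΓ; exact hΓ _ h'
  | mp _ _ ih1 ih2 =>
      intro M hser s hΓ
      exact (sat_imp.mp (ih1 M hser s hΓ)) (ih2 M hser s hΓ)
end KP

/-- Every bimodal model is a ⊡-morphic image of some serial bimodal model;
consequently K⊡ is sound and strongly complete with respect to the class of
serial bimodal frames. -/
theorem stmt13 :
    (∀ M : BiModel, ∃ (M' : BiModel) (f : M'.S → M.S),
      SerialM M' ∧ Function.Surjective f ∧ IsMorphism M' M f) ∧
    (∀ (Γ : Set Form) (φ : Form),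
      Deriv NoExt Γ φ ↔
        ∀ (M : BiModel), SerialM M →
          ∀ s : M.S, (∀ γ ∈ Γ, sat M s γ) → sat M s φ) := by
  constructor
  · exact KP.part1
  · intro Γ φ
    constructor
    · intro hd M hser s hs
      exact KP.der_sound hd M hser s hs
    · intro hsem
      by_contra hnd
      obtain ⟨Sg, hSg1, hSg2, hSg3⟩ := KP.lindenbaum (KP.con_insert_of_not_der hnd)
      set W : KP.MCS := ⟨Sg, hSg2, hSg3⟩
      obtain ⟨M', f, hser, hsurj, hmor⟩ := KP.part1 (KP.canModel W)
      obtain ⟨x, hx⟩ := hsurj W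
      have hsat : ∀ γ ∈ Γ, sat M' x γ := by
        intro γ hγ
        rw [KP.sat_morph hmor γ x, hx, KP.truth_lemma W γ W]
        exact hSg1 (Set.mem_insert_of_mem _ hγ)
      have hφ : sat M' x φ := hsem M' hser x hsat
      rw [KP.sat_morph hmor φ x, hx, KP.truth_lemma W φ W] at hφ
      exact W.not_mem_of_neg_mem (hSg1 (Set.mem_insert _ _)) hφ
end

section
/- The axiom scheme φ → (⊡φ → (⊡(φ → ψ) → ⊡ψ)) is valid on the class of bimodal frames ⟨S, R1, R2⟩ in which R1 is reflexive or R2 is reflexive (in particular, on the class of reflexive bimodal frames). -/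
/-- The axiom ⊡T: φ → (⊡φ → (⊡(φ → ψ) → ⊡ψ)) is valid on every bimodal model
in which R1 is reflexive or R2 is reflexive (in particular on reflexive models). -/
theorem stmt14 (M : BiModel) (h : Reflexive M.R1 ∨ Reflexive M.R2)
    (φ ψ : Form) (s : M.S) :
    sat M s (φ.imp ((Form.box φ).imp ((Form.box (φ.imp ψ)).imp (Form.box ψ)))) := by
  simp only [Form.imp, sat, not_and, not_not]
  intro hφ hbφ hbi t u h1 h2
  rcases h with hr | hr
  · have hsφ : ∀ u, M.R2 s u → sat M u φ := fun u h2 => (hbφ s u (hr s) h2).mp hφ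
    have htφ : sat M t φ := (hbφ t u h1 h2).mpr (hsφ u h2)
    have hi := hbi t u h1 h2
    constructor
    · intro htψ
      by_contra huψ
      exact huψ (hi.mp (fun _ => htψ) (hsφ u h2))
    · intro huψ
      by_contra htψ'
      exact htψ' (hi.mpr (fun _ => huψ) htφ)
  · have hsφ : ∀ t, M.R1 s t → sat M t φ := fun t h1 => (hbφ t s h1 (hr s)).mpr hφ
    have huφ : sat M u φ := (hbφ t u h1 h2).mp (hsφ t h1)
    have hi := hbi t u h1 h2
    constructor
    · intro htψ
      by_contra huψ
      exact huψ (hi.mp (fun _ => htψ) huφ)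
    · intro huψ
      by_contra htψ'
      exact htψ' (hi.mpr (fun _ => huψ) (hsφ t h1))
end

section
/- The axiom scheme ⊡B: φ → ⊡((⊡φ ∧ ⊡(φ → ψ) ∧ ¬⊡ψ) → χ) is valid on the class of symmetric bimodal frames. -/
/-- The axiom ⊡B: φ → ⊡((⊡φ ∧ ⊡(φ → ψ) ∧ ¬⊡ψ) → χ) is valid on the class of
symmetric bimodal frames. -/
theorem stmt16 (M : BiModel) (h : Symmetric M.R1 ∧ Symmetric M.R2)
    (φ ψ χ : Form) (s : M.S) :
    sat M s (φ.imp (Form.box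
      ((((Form.box φ).conj (Form.box (φ.imp ψ))).conj
        (Form.neg (Form.box ψ))).imp χ))) := by
  obtain ⟨h1, h2⟩ := h
  simp only [Form.imp, sat, not_and, not_not]
  intro hφ t u hst hsu
  have key : ∀ v : M.S, (M.R1 v s ∨ M.R2 v s) →
      (∀ a b, M.R1 v a → M.R2 v b → (sat M a φ ↔ sat M b φ)) →
      (∀ a b, M.R1 v a → M.R2 v b → ((sat M a φ → sat M a ψ) ↔ (sat M b φ → sat M b ψ))) →
      (¬ ∀ a b, M.R1 v a → M.R2 v b → (sat M a ψ ↔ sat M b ψ)) → False := by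
    intro v hv hbφ hbimp hnbψ
    push_neg at hnbψ
    obtain ⟨a, b, hva, hvb, hab⟩ := hnbψ
    have haφ : sat M a φ ∧ sat M b φ := by
      rcases hv with hv | hv
      · have hbφ' : sat M b φ := (hbφ s b hv hvb).mp hφ
        exact ⟨(hbφ a b hva hvb).mpr hbφ', hbφ'⟩
      · have haφ' : sat M a φ := (hbφ a s hva hv).mpr hφ
        exact ⟨haφ', (hbφ a b hva hvb).mp haφ'⟩
    have := hbimp a b hva hvb
    rcases hab with ⟨ha, hb⟩ | ⟨ha, hb⟩
    · exact hb (this.mp (fun _ => ha) haφ.2)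
    · exact ha (this.mpr (fun _ => hb) haφ.1)
  constructor <;> intro _ ⟨⟨hA, hB⟩, hC⟩
  · exact (key u (Or.inr (h2 hsu)) hA hB hC).elim
  · exact (key t (Or.inl (h1 hst)) hA hB hC).elim
end

section
/- For every set Γ of L(⊡)-formulas and every L(⊡)-formula φ, the following are equivalent: (a) Γ ⊢_{K5⊡} φ; (b) Γ ⊨ φ over the class of quasi-Euclidean bimodal frames; (c) Γ ⊨ φ over the class of pseudo-Euclidean bimodal frames. -/
/-- The two accessibility relations, indexed (index `true` is R1, `false` is R2). -/
def BiModel.rel (M : BiModel) : Bool → M.S → M.S → Prop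
  | true => M.R1
  | false => M.R2

/-- A model is quasi-Euclidean: ∀ i j x y z, x R_i y ∧ x R_j z → y R_j z. -/
def QE (M : BiModel) : Prop :=
  ∀ (i j : Bool) (x y z : M.S), M.rel i x y → M.rel j x z → M.rel j y z

/-- A model is pseudo-Euclidean: ∀ i j x y z, x R_i y ∧ x R_j z → y R1 z ∧ y R2 z. -/
def PE (M : BiModel) : Prop :=
  ∀ (i j : Bool) (x y z : M.S), M.rel i x y → M.rel j x z → M.R1 y z ∧ M.R2 y z

/-- Instances of the axiom ⊡5: ¬⊡φ → ⊡(¬⊡φ ∨ ψ). -/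
def Ax5 : Form → Prop := fun θ =>
  ∃ φ ψ : Form,
    θ = (Form.neg (Form.box φ)).imp
      (Form.box ((Form.neg (Form.box φ)).disj ψ))

/-!
Soundness: in a quasi-Euclidean model every R₁- or R₂-successor `y` of `s` sees all R₁- and
R₂-successors of `s`, so a pair of successors witnessing `¬⊡φ` at `s` witnesses it at `y` as well;
this validates ⊡5. The axioms of K⊡ hold in every model.

Completeness, already over pseudo-Euclidean frames: take the canonical model on maximal consistent
sets with both relations equal to `s R t ↔ necessities s ⊆ t`, where
`necessities s = {χ | ⊡(χ ∨ ψ) ∈ s for all ψ}` collects the formulas necessary at `s`. By ⊡DIS,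
`⊡φ ∈ s` puts `φ` or `¬φ` into `necessities s`, which gives the truth lemma; by ⊡5, `necessities`
is antitone along `R`, which makes the frame pseudo-Euclidean. Since pseudo-Euclidean frames are
quasi-Euclidean, `⊢` implies validity over qe frames, which implies validity over pe frames,
which implies `⊢`.
-/

namespace Form

def bot : Form := neg top

attribute [local simp] beval

@[simp] theorem beval_imp (v : Form → Bool) (φ ψ : Form) :
    beval v (φ.imp ψ) = (!beval v φ || beval v ψ) := by
  simp [imp]

@[simp] theorem beval_disj (v : Form → Bool) (φ ψ : Form) :
    beval v (φ.disj ψ) = (beval v φ || beval v ψ) := by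
  simp [disj]

@[simp] theorem beval_biff (v : Form → Bool) (φ ψ : Form) :
    beval v (φ.biff ψ) = (beval v φ == beval v ψ) := by
  cases h1 : beval v φ <;> cases h2 : beval v ψ <;> simp [biff, h1, h2]

@[simp] theorem beval_top (v : Form → Bool) : beval v top = true := by
  simp [top]

@[simp] theorem beval_bot (v : Form → Bool) : beval v bot = false := by
  simp [bot]

theorem isTaut_K (φ ψ : Form) : (φ.imp (ψ.imp φ)).isTaut := by
  intro v; cases h : beval v φ <;> simp [h]

theorem isTaut_S (φ ψ χ : Form) :
    ((φ.imp (ψ.imp χ)).imp ((φ.imp ψ).imp (φ.imp χ))).isTaut := by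
  intro v; cases h1 : beval v φ <;> cases h2 : beval v ψ <;> simp [h1, h2]

theorem isTaut_imp_self (φ : Form) : (φ.imp φ).isTaut := by
  intro v; cases h : beval v φ <;> simp [h]

theorem isTaut_imp_neg_imp_bot (φ : Form) : (φ.imp ((neg φ).imp bot)).isTaut := by
  intro v; cases h : beval v φ <;> simp [h]

theorem isTaut_conj_imp_left (φ ψ : Form) : ((φ.conj ψ).imp φ).isTaut := by
  intro v; cases h : beval v φ <;> simp [h]

theorem isTaut_conj_imp_right (φ ψ : Form) : ((φ.conj ψ).imp ψ).isTaut := by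
  intro v; cases h : beval v ψ <;> simp [h]

theorem isTaut_imp_imp_conj (φ ψ : Form) : (φ.imp (ψ.imp (φ.conj ψ))).isTaut := by
  intro v; cases h1 : beval v φ <;> cases h2 : beval v ψ <;> simp [h1, h2]

theorem isTaut_imp_bot_imp_neg_imp_bot (φ : Form) :
    ((φ.imp bot).imp (((neg φ).imp bot).imp bot)).isTaut := by
  intro v; cases h : beval v φ <;> simp [h]

theorem isTaut_imp_imp_imp_conj_imp (φ ψ χ θ : Form) :
    ((φ.imp (ψ.imp χ)).imp ((θ.imp ψ).imp ((φ.conj θ).imp χ))).isTaut := by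
  intro v; cases h1 : beval v φ <;> cases h2 : beval v ψ <;> cases h3 : beval v θ <;> simp [h1, h2, h3]

theorem isTaut_top_disj_biff (ψ : Form) : ((top.disj ψ).biff top).isTaut := by
  intro v; simp

theorem isTaut_disj_conj_biff (φ ψ χ : Form) :
    (((φ.disj χ).conj (ψ.disj χ)).biff ((φ.conj ψ).disj χ)).isTaut := by
  intro v; cases h1 : beval v φ <;> cases h2 : beval v ψ <;> cases h3 : beval v χ <;> simp [h1, h2, h3]

theorem isTaut_imp_disj_biff (φ ψ : Form) : ((φ.imp ψ).imp ((φ.disj ψ).biff ψ)).isTaut := by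
  intro v; cases h1 : beval v φ <;> cases h2 : beval v ψ <;> simp [h1, h2]

theorem isTaut_imp_bot_imp_neg (φ : Form) : ((φ.imp bot).imp (neg φ)).isTaut := by
  intro v; cases h : beval v φ <;> simp [h]

theorem isTaut_neg_imp_bot_imp (φ : Form) : (((neg φ).imp bot).imp φ).isTaut := by
  intro v; cases h : beval v φ <;> simp [h]

end Form

open Form

variable {Ext : Form → Prop} {Γ Δ : Set Form} {φ ψ χ : Form}

theorem KThm.mp_taut (h : (φ.imp ψ).isTaut) (hφ : KThm Ext φ) : KThm Ext ψ :=
  mp (taut h) hφ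

theorem KThm.mp₂_taut (h : (φ.imp (ψ.imp χ)).isTaut) (hφ : KThm Ext φ) (hψ : KThm Ext ψ) :
    KThm Ext χ :=
  mp (mp (taut h) hφ) hψ

namespace Deriv

theorem mp_taut (h : (φ.imp ψ).isTaut) (hφ : Deriv Ext Γ φ) : Deriv Ext Γ ψ :=
  mp (thm (.taut h)) hφ

theorem mp₂_taut (h : (φ.imp (ψ.imp χ)).isTaut) (hφ : Deriv Ext Γ φ) (hψ : Deriv Ext Γ ψ) :
    Deriv Ext Γ χ :=
  mp (mp (thm (.taut h)) hφ) hψ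

theorem mono_s19 (hΓΔ : Γ ⊆ Δ) (h : Deriv Ext Γ φ) : Deriv Ext Δ φ := by
  induction h with
  | thm h => exact thm h
  | prem h => exact prem (hΓΔ h)
  | mp _ _ ih₁ ih₂ => exact mp ih₁ ih₂

theorem imp_of_insert (h : Deriv Ext (insert ψ Γ) φ) : Deriv Ext Γ (ψ.imp φ) := by
  induction h with
  | thm h => exact mp_taut (isTaut_K _ _) (thm h)
  | prem h =>
    rcases h with rfl | h
    · exact thm (.taut (isTaut_imp_self _))
    · exact mp_taut (isTaut_K _ _) (prem h)
  | mp _ _ ih₁ ih₂ => exact mp₂_taut (isTaut_S _ _ _) ih₁ ih₂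

theorem exists_mem_of_sUnion {c : Set (Set Form)} (hc : IsChain (· ⊆ ·) c) (hne : c.Nonempty)
    (h : Deriv Ext (⋃₀ c) φ) : ∃ Γ ∈ c, Deriv Ext Γ φ := by
  induction h with
  | thm h =>
    obtain ⟨Γ, hΓ⟩ := hne
    exact ⟨Γ, hΓ, thm h⟩
  | prem h =>
    obtain ⟨Γ, hΓ, hφ⟩ := h
    exact ⟨Γ, hΓ, prem hφ⟩
  | mp _ _ ih₁ ih₂ =>
    obtain ⟨Γ₁, hΓ₁, h₁⟩ := ih₁
    obtain ⟨Γ₂, hΓ₂, h₂⟩ := ih₂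
    rcases hc.total hΓ₁ hΓ₂ with h₁₂ | h₂₁
    · exact ⟨Γ₂, hΓ₂, mp (h₁.mono_s19 h₁₂) h₂⟩
    · exact ⟨Γ₁, hΓ₁, mp h₁ (h₂.mono_s19 h₂₁)⟩

theorem exists_imp_of_conj_mem {Λ : Set Form} (htop : top ∈ Λ)
    (hconj : ∀ a ∈ Λ, ∀ b ∈ Λ, a.conj b ∈ Λ) (h : Deriv Ext Λ φ) :
    ∃ χ ∈ Λ, KThm Ext (χ.imp φ) := by
  induction h with
  | thm h => exact ⟨top, htop, .mp_taut (isTaut_K _ _) h⟩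
  | prem h => exact ⟨_, h, .taut (isTaut_imp_self _)⟩
  | mp _ _ ih₁ ih₂ =>
    obtain ⟨χ₁, hχ₁, h₁⟩ := ih₁
    obtain ⟨χ₂, hχ₂, h₂⟩ := ih₂
    exact ⟨_, hconj _ hχ₁ _ hχ₂, .mp₂_taut (isTaut_imp_imp_imp_conj_imp _ _ _ _) h₁ h₂⟩

end Deriv

def Consistent (Ext : Form → Prop) (Γ : Set Form) : Prop := ¬ Deriv Ext Γ bot

def MaxConsistent (Ext : Form → Prop) (Δ : Set Form) : Prop :=
  Consistent Ext Δ ∧ ∀ φ, φ ∈ Δ ∨ neg φ ∈ Δ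

theorem Deriv.neg_of_insert_bot (h : Deriv Ext (insert φ Γ) bot) : Deriv Ext Γ (neg φ) :=
  mp_taut (isTaut_imp_bot_imp_neg φ) (imp_of_insert h)

theorem Deriv.of_insert_neg_bot (h : Deriv Ext (insert (neg φ) Γ) bot) : Deriv Ext Γ φ :=
  mp_taut (isTaut_neg_imp_bot_imp φ) (imp_of_insert h)

theorem exists_maxConsistent_superset (h : Consistent Ext Γ) :
    ∃ Δ, Γ ⊆ Δ ∧ MaxConsistent Ext Δ := by
  have union_consistent (c : Set (Set Form)) (hc : c ⊆ {Δ | Consistent Ext Δ})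
      (hchain : IsChain (· ⊆ ·) c) (hne : c.Nonempty) : Consistent Ext (⋃₀ c) := fun hbot =>
    have ⟨_, hΓ, hder⟩ := hbot.exists_mem_of_sUnion hchain hne
    hc hΓ hder
  obtain ⟨Δ, hΓΔ, hmax⟩ := zorn_subset_nonempty {Δ | Consistent Ext Δ}
    (fun c hc hchain hne => ⟨⋃₀ c, union_consistent c hc hchain hne,
      fun _ => Set.subset_sUnion_of_mem⟩) Γ h
  refine ⟨Δ, hΓΔ, hmax.prop, fun φ => ?_⟩
  by_contra! hφ
  have refute (ψ : Form) (hψ : ψ ∉ Δ) : Deriv Ext Δ (ψ.imp bot) :=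
    Deriv.imp_of_insert (not_not.1 fun hc => hψ (hmax.mem_of_prop_insert hc))
  exact hmax.prop (.mp₂_taut (isTaut_imp_bot_imp_neg_imp_bot φ) (refute _ hφ.1) (refute _ hφ.2))

namespace MaxConsistent

theorem mem_of_deriv (hΔ : MaxConsistent Ext Δ) (h : Deriv Ext Δ φ) : φ ∈ Δ := by
  by_contra hφ
  exact hΔ.1 (.mp₂_taut (isTaut_imp_neg_imp_bot φ) h (.prem ((hΔ.2 φ).resolve_left hφ)))

theorem mem_of_thm (hΔ : MaxConsistent Ext Δ) (h : KThm Ext φ) : φ ∈ Δ :=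
  hΔ.mem_of_deriv (.thm h)

theorem mp (hΔ : MaxConsistent Ext Δ) (h : φ.imp ψ ∈ Δ) (hφ : φ ∈ Δ) : ψ ∈ Δ :=
  hΔ.mem_of_deriv (.mp (.prem h) (.prem hφ))

theorem neg_mem_iff (hΔ : MaxConsistent Ext Δ) : neg φ ∈ Δ ↔ φ ∉ Δ :=
  ⟨fun hn hφ => hΔ.1 (.mp₂_taut (isTaut_imp_neg_imp_bot φ) (.prem hφ) (.prem hn)),
    (hΔ.2 φ).resolve_left⟩

theorem conj_mem_iff (hΔ : MaxConsistent Ext Δ) : φ.conj ψ ∈ Δ ↔ φ ∈ Δ ∧ ψ ∈ Δ :=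
  ⟨fun h => ⟨hΔ.mem_of_deriv (.mp_taut (isTaut_conj_imp_left φ ψ) (.prem h)),
      hΔ.mem_of_deriv (.mp_taut (isTaut_conj_imp_right φ ψ) (.prem h))⟩,
    fun h => hΔ.mem_of_deriv (.mp₂_taut (isTaut_imp_imp_conj φ ψ) (.prem h.1) (.prem h.2))⟩

theorem disj_mem_iff (hΔ : MaxConsistent Ext Δ) : φ.disj ψ ∈ Δ ↔ φ ∈ Δ ∨ ψ ∈ Δ := by
  rw [disj, hΔ.neg_mem_iff, hΔ.conj_mem_iff, hΔ.neg_mem_iff, hΔ.neg_mem_iff]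
  tauto

theorem mem_iff_of_thm_biff (hΔ : MaxConsistent Ext Δ) (h : KThm Ext (φ.biff ψ)) :
    φ ∈ Δ ↔ ψ ∈ Δ :=
  have ⟨h₁, h₂⟩ := hΔ.conj_mem_iff.1 (hΔ.mem_of_thm h)
  ⟨hΔ.mp h₁, hΔ.mp h₂⟩

end MaxConsistent

def necessities (Δ : Set Form) : Set Form := {χ | ∀ ψ, box (χ.disj ψ) ∈ Δ}

namespace MaxConsistent

theorem top_mem_necessities (hΔ : MaxConsistent Ext Δ) : top ∈ necessities Δ := fun ψ =>
  (hΔ.mem_iff_of_thm_biff (.re (.taut (isTaut_top_disj_biff ψ)))).2 (hΔ.mem_of_thm .boxTop)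

theorem conj_mem_necessities (hΔ : MaxConsistent Ext Δ) (hφ : φ ∈ necessities Δ)
    (hψ : ψ ∈ necessities Δ) : φ.conj ψ ∈ necessities Δ := fun χ =>
  (hΔ.mem_iff_of_thm_biff (.re (.taut (isTaut_disj_conj_biff φ ψ χ)))).1
    (hΔ.mp (hΔ.mem_of_thm (.con _ _)) (hΔ.conj_mem_iff.2 ⟨hφ χ, hψ χ⟩))

theorem box_mem_of_deriv_necessities (hΔ : MaxConsistent Ext Δ)
    (h : Deriv Ext (necessities Δ) φ) : box φ ∈ Δ := by
  obtain ⟨χ, hχ, himp⟩ := h.exists_imp_of_conj_mem hΔ.top_mem_necessities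
    fun _ ha _ hb => hΔ.conj_mem_necessities ha hb
  exact (hΔ.mem_iff_of_thm_biff (.re (.mp_taut (isTaut_imp_disj_biff χ φ) himp))).1 (hχ φ)

theorem consistent_insert_necessities (hΔ : MaxConsistent Ext Δ) (h : box φ ∉ Δ) :
    Consistent Ext (insert φ (necessities Δ)) ∧
      Consistent Ext (insert (neg φ) (necessities Δ)) :=
  ⟨fun hφ => h ((hΔ.mem_iff_of_thm_biff (.equ φ)).2
      (hΔ.box_mem_of_deriv_necessities (.neg_of_insert_bot hφ))),
    fun hnφ => h (hΔ.box_mem_of_deriv_necessities (.of_insert_neg_bot hnφ))⟩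

theorem mem_or_neg_mem_necessities (hΔ : MaxConsistent Ext Δ) (h : box φ ∈ Δ) :
    φ ∈ necessities Δ ∨ neg φ ∈ necessities Δ := by
  refine or_iff_not_imp_left.2 fun hφ χ => ?_
  obtain ⟨ψ, hψ⟩ := not_forall.1 hφ
  exact (hΔ.disj_mem_iff.1 (hΔ.mp (hΔ.mem_of_thm (.dis φ ψ χ)) h)).resolve_left hψ

theorem necessities_subset_of_subset (h5 : ∀ θ, Ax5 θ → Ext θ) (hΔ : MaxConsistent Ext Δ)
    (hΓ : MaxConsistent Ext Γ) (h : necessities Δ ⊆ Γ) : necessities Γ ⊆ necessities Δ := by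
  intro χ hχ
  by_contra hnot
  obtain ⟨ψ, hψ⟩ := not_forall.1 hnot
  have hneg : neg (box (χ.disj ψ)) ∈ necessities Δ := fun ψ' =>
    hΔ.mp (hΔ.mem_of_thm (.ext (h5 _ ⟨_, ψ', rfl⟩))) (hΔ.neg_mem_iff.2 hψ)
  exact hΓ.neg_mem_iff.1 (h hneg) (hχ ψ)

end MaxConsistent

def canonicalModel (Ext : Form → Prop) (hne : Nonempty {Δ : Set Form // MaxConsistent Ext Δ}) :
    BiModel where
  S := {Δ : Set Form // MaxConsistent Ext Δ}
  ne := hne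
  R1 s t := necessities s.1 ⊆ t.1
  R2 s t := necessities s.1 ⊆ t.1
  V n := {s | var n ∈ s.1}

theorem sat_canonicalModel_iff {hne : Nonempty {Δ : Set Form // MaxConsistent Ext Δ}}
    {s : (canonicalModel Ext hne).S} : sat (canonicalModel Ext hne) s φ ↔ φ ∈ s.1 := by
  induction φ generalizing s with
  | var n => rfl
  | neg φ ih => exact (not_congr ih).trans s.2.neg_mem_iff.symm
  | conj φ ψ ihφ ihψ => exact (and_congr ihφ ihψ).trans s.2.conj_mem_iff.symm
  | box φ ih =>
    constructor
    · intro h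
      by_contra hφ
      obtain ⟨hφ₁, hφ₂⟩ := s.2.consistent_insert_necessities hφ
      obtain ⟨t, hst, ht⟩ := exists_maxConsistent_superset hφ₁
      obtain ⟨u, hsu, hu⟩ := exists_maxConsistent_superset hφ₂
      have htu : φ ∈ t ↔ φ ∈ u := ih.symm.trans <| (h ⟨t, ht⟩ ⟨u, hu⟩
        ((Set.subset_insert _ _).trans hst) ((Set.subset_insert _ _).trans hsu)).trans ih
      exact hu.neg_mem_iff.1 (hsu (.inl rfl)) (htu.1 (hst (.inl rfl)))
    · intro h t u hst hsu
      rw [ih, ih]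
      rcases s.2.mem_or_neg_mem_necessities h with hφ | hφ
      · exact iff_of_true (hst hφ) (hsu hφ)
      · exact iff_of_false (t.2.neg_mem_iff.1 (hst hφ)) (u.2.neg_mem_iff.1 (hsu hφ))

theorem canonicalModel_pe (h5 : ∀ θ, Ax5 θ → Ext θ)
    (hne : Nonempty {Δ : Set Form // MaxConsistent Ext Δ}) : PE (canonicalModel Ext hne) := by
  intro i j x y z hxy hxz
  have hyz : necessities y.1 ⊆ z.1 :=
    (x.2.necessities_subset_of_subset h5 y.2 (by cases i <;> exact hxy)).trans
      (by cases j <;> exact hxz)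
  exact ⟨hyz, hyz⟩

theorem Deriv.of_forall_pe (h5 : ∀ θ, Ax5 θ → Ext θ)
    (h : ∀ M : BiModel, PE M → ∀ s : M.S, (∀ γ ∈ Γ, sat M s γ) → sat M s φ) :
    Deriv Ext Γ φ := by
  by_contra hφ
  obtain ⟨Δ, hΓΔ, hΔ⟩ := exists_maxConsistent_superset (Γ := insert (neg φ) Γ)
    fun hinc => hφ (.of_insert_neg_bot hinc)
  have hsat := h _ (canonicalModel_pe h5 ⟨⟨Δ, hΔ⟩⟩) ⟨Δ, hΔ⟩
    fun γ hγ => sat_canonicalModel_iff.2 (hΓΔ (.inr hγ))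
  exact hΔ.neg_mem_iff.1 (hΓΔ (.inl rfl)) (sat_canonicalModel_iff.1 hsat)

section Soundness

variable {M : BiModel} {s : M.S}

theorem sat_imp_s19 : sat M s (φ.imp ψ) ↔ (sat M s φ → sat M s ψ) := by
  simp only [imp, sat]
  tauto

theorem sat_disj_s19 : sat M s (φ.disj ψ) ↔ sat M s φ ∨ sat M s ψ := by
  simp only [disj, sat]
  tauto

theorem sat_biff_s19 : sat M s (φ.biff ψ) ↔ (sat M s φ ↔ sat M s ψ) := by
  simp only [biff, sat_imp_s19, sat]
  tauto

theorem sat_top_s19 : sat M s top :=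
  sat_imp_s19.2 id

theorem sat_of_isTaut (h : φ.isTaut) : sat M s φ := by
  classical
  have key (ψ : Form) : beval (fun θ => decide (sat M s θ)) ψ = true ↔ sat M s ψ := by
    induction ψ with
    | var n => simp [beval]
    | neg ψ ih => simp [beval, sat, ← ih]
    | conj ψ χ ihψ ihχ => simp [beval, sat, ihψ, ihχ]
    | box ψ => simp [beval]
  exact (key φ).1 (h _)

theorem sat_dis (φ ψ χ : Form) :
    sat M s ((box φ).imp ((box (φ.disj ψ)).disj (box ((neg φ).disj χ)))) := by
  refine sat_imp_s19.2 fun h => sat_disj_s19.2 ?_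
  by_cases hφ : ∃ t, M.R1 s t ∧ sat M t φ
  · obtain ⟨t₀, ht₀, hφt₀⟩ := hφ
    refine .inl fun t u ht hu => ?_
    have hφu : sat M u φ := (h t₀ u ht₀ hu).1 hφt₀
    exact iff_of_true (sat_disj_s19.2 (.inl ((h t u ht hu).2 hφu))) (sat_disj_s19.2 (.inl hφu))
  · refine .inr fun t u ht hu => ?_
    have hφt : ¬ sat M t φ := fun hφt => hφ ⟨t, ht, hφt⟩
    exact iff_of_true (sat_disj_s19.2 (.inl hφt)) (sat_disj_s19.2 (.inl (mt (h t u ht hu).2 hφt)))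

theorem QE.not_sat_box_of_rel (hM : QE M) {y : M.S} (i : Bool) (hy : M.rel i s y)
    (h : ¬ sat M s (box φ)) : ¬ sat M y (box φ) := by
  simp only [sat, not_forall] at h ⊢
  obtain ⟨t, u, ht, hu, htu⟩ := h
  exact ⟨t, u, hM i true s y t hy ht, hM i false s y u hy hu, htu⟩

theorem QE.sat_of_ax5 (hM : QE M) {θ : Form} (hθ : Ax5 θ) : sat M s θ := by
  obtain ⟨φ, ψ, rfl⟩ := hθ
  refine sat_imp_s19.2 fun h t u ht hu => ?_
  exact iff_of_true (sat_disj_s19.2 (.inl (hM.not_sat_box_of_rel true ht h)))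
    (sat_disj_s19.2 (.inl (hM.not_sat_box_of_rel false hu h)))

theorem KThm.sat (hExt : ∀ θ, Ext θ → ∀ s : M.S, sat M s θ) (h : KThm Ext φ) :
    sat M s φ := by
  induction h generalizing s with
  | taut h => exact sat_of_isTaut h
  | boxTop => exact fun _ _ _ _ => iff_of_true sat_top_s19 sat_top_s19
  | equ φ => exact sat_biff_s19.2 (forall₄_congr fun _ _ _ _ => not_iff_not.symm)
  | con φ ψ => exact sat_imp_s19.2 fun ⟨hφ, hψ⟩ t u ht hu => and_congr (hφ t u ht hu) (hψ t u ht hu)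
  | dis φ ψ χ => exact sat_dis φ ψ χ
  | ext h => exact hExt _ h s
  | mp _ _ ih₁ ih₂ => exact sat_imp_s19.1 ih₁ ih₂
  | re _ ih =>
    have hφψ (w : M.S) := sat_biff_s19.1 (ih (s := w))
    simp only [sat_biff_s19, sat, hφψ]

theorem Deriv.sat (hExt : ∀ θ, Ext θ → ∀ s : M.S, sat M s θ) (h : Deriv Ext Γ φ)
    (hΓ : ∀ γ ∈ Γ, sat M s γ) : sat M s φ := by
  induction h with
  | thm h => exact h.sat hExt
  | prem h => exact hΓ _ h
  | mp _ _ ih₁ ih₂ => exact sat_imp_s19.1 ih₁ ih₂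

theorem PE.qe (hM : PE M) : QE M := by
  intro i j x y z hxy hxz
  cases j
  · exact (hM i false x y z hxy hxz).2
  · exact (hM i true x y z hxy hxz).1

end Soundness

/-- For K5⊡ = K⊡ + ⊡5, the following are equivalent: (a) Γ ⊢_{K5⊡} φ;
(b) Γ ⊨ φ over quasi-Euclidean frames; (c) Γ ⊨ φ over pseudo-Euclidean frames. -/
theorem stmt19 (Γ : Set Form) (φ : Form) :
    (Deriv Ax5 Γ φ ↔
      ∀ (M : BiModel), QE M → ∀ s : M.S, (∀ γ ∈ Γ, sat M s γ) → sat M s φ) ∧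
    (Deriv Ax5 Γ φ ↔
      ∀ (M : BiModel), PE M → ∀ s : M.S, (∀ γ ∈ Γ, sat M s γ) → sat M s φ) := by
  have sound (h : Deriv Ax5 Γ φ) (M : BiModel) (hM : QE M) (s : M.S) :
      (∀ γ ∈ Γ, sat M s γ) → sat M s φ :=
    h.sat fun _ hθ _ => hM.sat_of_ax5 hθ
  have complete := Deriv.of_forall_pe (Ext := Ax5) (Γ := Γ) (φ := φ) fun _ => id
  exact ⟨⟨sound, fun h => complete fun M hM => h M hM.qe⟩,
    ⟨fun h M hM => sound h M hM.qe, complete⟩⟩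
end
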